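/- arXiv:1205.2935 — 5 statements merged into one kernel-verified Lean document; each statement's English description precedes it below -/
import Mathlib

section
/- The set of {+,-}-sequences of length n with an even number of minus signs is in bijection with the set of Young diagrams fitting inside an n×n square that are symmetric with respect to the main diagonal and have an even number of boxes on the main diagonal. -/
/-! A self-conjugate diagram `l` in the `(n+1)×(n+1)` square (one with
`#{i | j < l i} = l j` for all `j`; this alone forces `l` to be weakly decreasing and bounded
by `n + 1`) either has a full first row, hence also a full first column, and removing this
outer hook leaves a self-conjugate diagram in the `n×n` square with one diagonal box fewer; or
its first row is shorter, its last row is then empty, and dropping that row leaves a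
self-conjugate diagram in the `n×n` square with the same diagonal. By induction on `n`,
self-conjugate diagrams in the `n×n` square therefore correspond to sequences of `n` signs,
with the number of diagonal boxes equal to the number of minus signs. -/

namespace TypeD

open Finset

section
variable {n : ℕ}

def conjugate (l : Fin n → ℕ) (j : ℕ) : ℕ := #{i | j < l i}

def IsSelfConjugate (l : Fin n → ℕ) : Prop := ∀ j : Fin n, conjugate l j = l j

def diagCount (l : Fin n → ℕ) : ℕ := #{i | i.val < l i}

lemma conjugate_antitone (l : Fin n → ℕ) : Antitone (conjugate l) := fun _ _ hjk =>
  card_le_card <| monotone_filter_right _ fun _ _ hk => lt_of_le_of_lt hjk hk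

lemma conjugate_le (l : Fin n → ℕ) (j : ℕ) : conjugate l j ≤ n :=
  (card_filter_le _ _).trans_eq (card_fin n)

lemma IsSelfConjugate.antitone {l : Fin n → ℕ} (hl : IsSelfConjugate l) : Antitone l :=
  fun i j hij => by rw [← hl i, ← hl j]; exact conjugate_antitone l hij

lemma IsSelfConjugate.le {l : Fin n → ℕ} (hl : IsSelfConjugate l) (i : Fin n) : l i ≤ n :=
  hl i ▸ conjugate_le l i

lemma conjugate_cons (a : ℕ) (μ : Fin n → ℕ) (j : ℕ) :
    conjugate (Fin.cons a μ : Fin (n + 1) → ℕ) j = (if j < a then 1 else 0) + conjugate μ j := by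
  simp only [conjugate, Fin.card_filter_univ_succ', Fin.cons_zero, Fin.cons_succ]

lemma conjugate_snoc (μ : Fin n → ℕ) (a : ℕ) (j : ℕ) :
    conjugate (Fin.snoc μ a : Fin (n + 1) → ℕ) j = conjugate μ j + if j < a then 1 else 0 := by
  simp only [conjugate, card_filter, Fin.sum_univ_castSucc, Fin.snoc_castSucc, Fin.snoc_last]

lemma conjugate_add_one (μ : Fin n → ℕ) (j : ℕ) :
    conjugate (fun i => μ i + 1) (j + 1) = conjugate μ j := by
  simp only [conjugate, Nat.add_lt_add_iff_right]

lemma conjugate_add_one_zero (μ : Fin n → ℕ) : conjugate (fun i => μ i + 1) 0 = n := by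
  simp [conjugate]

lemma isSelfConjugate_snoc_zero {μ : Fin n → ℕ} :
    IsSelfConjugate (Fin.snoc μ 0 : Fin (n + 1) → ℕ) ↔ IsSelfConjugate μ := by
  simp only [IsSelfConjugate, Fin.forall_fin_succ', conjugate_snoc, Nat.not_lt_zero, if_false,
    add_zero, Fin.val_castSucc, Fin.snoc_castSucc, Fin.val_last, Fin.snoc_last]
  refine ⟨And.left, fun hμ => ⟨hμ, ?_⟩⟩
  rw [conjugate, card_eq_zero, filter_eq_empty_iff]
  exact fun i _ => not_lt.2 (IsSelfConjugate.le hμ i)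

lemma isSelfConjugate_cons_add_one {μ : Fin n → ℕ} :
    IsSelfConjugate (Fin.cons (n + 1) (fun i => μ i + 1) : Fin (n + 1) → ℕ) ↔
      IsSelfConjugate μ := by
  simp only [IsSelfConjugate, Fin.forall_fin_succ, conjugate_cons, Fin.val_zero, Fin.val_succ,
    Fin.cons_zero, Fin.cons_succ, conjugate_add_one, conjugate_add_one_zero]
  simp [add_comm 1]

lemma diagCount_snoc_zero (μ : Fin n → ℕ) :
    diagCount (Fin.snoc μ 0 : Fin (n + 1) → ℕ) = diagCount μ := by
  simp only [diagCount, card_filter, Fin.sum_univ_castSucc, Fin.snoc_castSucc, Fin.snoc_last,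
    Fin.val_castSucc]
  simp

lemma diagCount_cons_add_one (μ : Fin n → ℕ) :
    diagCount (Fin.cons (n + 1) (fun i => μ i + 1) : Fin (n + 1) → ℕ) = 1 + diagCount μ := by
  simp [diagCount, Fin.card_filter_univ_succ']

lemma IsSelfConjugate.eq_cons {l : Fin (n + 1) → ℕ} (hl : IsSelfConjugate l) (h0 : l 0 = n + 1) :
    l = Fin.cons (n + 1) (fun i => l i.succ - 1 + 1) := by
  refine funext fun i => Fin.cases (by simpa using h0) (fun i => ?_) i
  have hpos : 0 < l i.succ := by
    rw [← hl, conjugate, card_pos]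
    exact ⟨0, by simp [h0]⟩
  simp only [Fin.cons_succ]
  omega

lemma IsSelfConjugate.eq_snoc {l : Fin (n + 1) → ℕ} (hl : IsSelfConjugate l) (h0 : l 0 ≠ n + 1) :
    l = Fin.snoc (Fin.init l) 0 := by
  have hlast : l (Fin.last n) = 0 := by
    rw [← hl, conjugate, card_eq_zero, filter_eq_empty_iff]
    intro i _
    have := hl.antitone (Fin.zero_le i)
    have := hl.le 0
    simp only [Fin.val_last]
    omega
  rw [← hlast, Fin.snoc_init_self]

end

def SelfConjugateDiagram (n : ℕ) : Type := {l : Fin n → ℕ // IsSelfConjugate l}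

section
variable {n : ℕ}

/-- `true` adds a full outer hook (first row and first column), `false` an empty last row. -/
def extendDiagram : Bool × SelfConjugateDiagram n → SelfConjugateDiagram (n + 1)
  | (true, μ) => ⟨Fin.cons (n + 1) (fun i => μ.1 i + 1), isSelfConjugate_cons_add_one.2 μ.2⟩
  | (false, μ) => ⟨Fin.snoc μ.1 0, isSelfConjugate_snoc_zero.2 μ.2⟩

lemma extendDiagram_zero_eq_iff (p : Bool × SelfConjugateDiagram n) :
    (extendDiagram p).1 0 = n + 1 ↔ p.1 = true := by
  obtain ⟨_ | _, μ⟩ := p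
  · have hle : conjugate μ.1 0 ≤ n := conjugate_le μ.1 0
    rw [← (extendDiagram (false, μ)).2 0]
    simp only [extendDiagram, Fin.val_zero, conjugate_snoc, lt_irrefl, if_false, add_zero,
      Bool.false_eq_true, iff_false]
    omega
  · simp [extendDiagram]

lemma extendDiagram_bijective : Function.Bijective (extendDiagram (n := n)) := by
  constructor
  · rintro ⟨b, μ⟩ ⟨b', μ'⟩ h
    have hb : b = b' := by
      have := extendDiagram_zero_eq_iff (b, μ)
      rw [h, extendDiagram_zero_eq_iff] at this
      exact Bool.eq_iff_iff.2 this.symm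
    subst hb
    have hμ : μ.1 = μ'.1 := by
      cases b
      · simpa [extendDiagram] using congrArg (fun l => Fin.init l.1) h
      · funext i
        simpa [extendDiagram] using congrFun (congrArg Subtype.val h) i.succ
    rw [Subtype.ext hμ]
  · rintro ⟨l, hl⟩
    by_cases h0 : l 0 = n + 1
    · exact ⟨(true, ⟨_, isSelfConjugate_cons_add_one.1 (hl.eq_cons h0 ▸ hl)⟩),
        Subtype.ext (hl.eq_cons h0).symm⟩
    · exact ⟨(false, ⟨Fin.init l, isSelfConjugate_snoc_zero.1 (hl.eq_snoc h0 ▸ hl)⟩),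
        Subtype.ext (hl.eq_snoc h0).symm⟩

lemma diagCount_extendDiagram (b : Bool) (μ : SelfConjugateDiagram n) :
    diagCount (extendDiagram (b, μ)).1 = (if b = true then 1 else 0) + diagCount μ.1 := by
  cases b
  · simp [extendDiagram, diagCount_snoc_zero]
  · simp [extendDiagram, diagCount_cons_add_one]

theorem exists_equiv_diagCount_eq (n : ℕ) :
    ∃ e : (Fin n → Bool) ≃ SelfConjugateDiagram n,
      ∀ α, diagCount (e α).1 = #{i | α i = true} := by
  induction n with
  | zero =>
    refine ⟨Equiv.ofBijective (fun _ => ⟨Fin.elim0, fun j => j.elim0⟩)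
      ⟨fun _ _ _ => Subsingleton.elim _ _,
        fun l => ⟨Fin.elim0, Subtype.ext (Subsingleton.elim _ _)⟩⟩, fun α => ?_⟩
    simp [diagCount]
  | succ n ih =>
    obtain ⟨e, he⟩ := ih
    refine ⟨(Fin.consEquiv fun _ => Bool).symm.trans ((Equiv.prodCongr (Equiv.refl Bool) e).trans
      (Equiv.ofBijective _ extendDiagram_bijective)), fun α => ?_⟩
    simp only [Equiv.trans_apply, Fin.consEquiv_symm_apply, Equiv.prodCongr_apply, Equiv.coe_refl,
      Prod.map_apply, id_eq, Equiv.ofBijective_apply, diagCount_extendDiagram, he,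
      Fin.card_filter_univ_succ']
    rfl

end

/-- The set of `{+,-}`-sequences of length `n` with an even number of
minus signs is in bijection with the set of Young diagrams fitting inside an `n×n`
square that are symmetric with respect to the main diagonal and have an even number of
boxes on the main diagonal.  A sequence is encoded as a function `Fin n → Bool`
(`true` = minus); a Young diagram as a weakly decreasing sequence
`l : Fin n → ℕ` with `l i ≤ n`, symmetry meaning that the transpose
`j ↦ #{i | l i > j}` equals `l`, and the diagonal boxes being the indices `i` with
`l i ≥ i + 1`. -/
theorem statement_2 (n : ℕ) :
    Nonempty
      ({α : Fin n → Bool // Even ((Finset.univ.filter fun i => α i = true).card)} ≃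
       {l : Fin n → ℕ // Antitone l ∧ (∀ i, l i ≤ n) ∧
          (∀ j : Fin n, (Finset.univ.filter fun i : Fin n => j.val < l i).card = l j) ∧
          Even ((Finset.univ.filter fun i : Fin n => i.val < l i).card)}) := by
  obtain ⟨e, he⟩ := exists_equiv_diagCount_eq n
  refine ⟨(e.subtypeEquiv (q := fun l => Even (diagCount l.1)) fun α => by rw [he]).trans <|
    (Equiv.subtypeSubtypeEquivSubtypeInter IsSelfConjugate fun l => Even (diagCount l)).trans <|
    Equiv.subtypeEquivRight fun l => ?_⟩
  exact ⟨fun ⟨hl, hd⟩ => ⟨hl.antitone, hl.le, hl, hd⟩, fun ⟨_, _, hl, hd⟩ => ⟨hl, hd⟩⟩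

end TypeD
end

section
/- For any {+,-}-sequence α of length n extended by n pluses on the left and n minuses on the right, there exists a unique non-crossing perfect matching of the 4n points in which every arc connects a + with a - and the endpoint labeled + has smaller index than the endpoint labeled -. -/
namespace TypeD

attribute [local instance] Classical.propDecidable

/-- A `{+,-}`-sequence of length `n`; `true` encodes a minus sign. -/
abbrev Seq (n : ℕ) := Fin n → Bool

/-- The sequence has an even number of minus signs. -/
def EvenMinus {n : ℕ} (α : Seq n) : Prop :=
  Even ({i : Fin n | α i = true}.ncard)

/-- The extended diagrammatical weight of a sequence, as labels on `4n` points
(indices `0,…,4n-1` correspond to the points `-2n,…,-1,1,…,2n`):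
`n` frozen pluses on the left, then the antisymmetric extension of `α`,
then `n` frozen minuses on the right.  `true` = minus = `∧`, `false` = plus = `∨`. -/
def extLab {n : ℕ} (α : Seq n) (i : Fin (4 * n)) : Bool :=
  if _h1 : i.val < n then false
  else if _h2 : i.val < 2 * n then !α ⟨2 * n - 1 - i.val, by omega⟩
  else if _h3 : i.val < 3 * n then α ⟨i.val - 2 * n, by omega⟩
  else true

/-- A perfect matching of `m` points on a line by non-crossing arcs drawn in the
lower half plane, encoded as a fixed-point free involution. -/
structure IsMatching {m : ℕ} (f : Fin m → Fin m) : Prop where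
  invol : ∀ i, f (f i) = i
  nofix : ∀ i, f i ≠ i
  noncross : ∀ a b : Fin m, a < f a → b < f b → a < b → b < f a → f b < f a

/-- The non-crossing matching of the `4n` extended points of `α` in which every arc
joins a plus to a minus lying to its right. -/
def IsNC {n : ℕ} (α : Seq n) (f : Fin (4 * n) → Fin (4 * n)) : Prop :=
  IsMatching f ∧ ∀ i, i < f i → extLab α i = false ∧ extLab α (f i) = true

/-- The arc of `f` starting at `i` crosses the middle of the diagram. -/
def Cross {n : ℕ} (f : Fin (4 * n) → Fin (4 * n)) (i : Fin (4 * n)) : Prop :=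
  i.val < 2 * n ∧ 2 * n ≤ (f i).val

/-- The rank of a middle-crossing arc (with left endpoint `a`), counting from the
innermost one (which has rank `1`). -/
noncomputable def rank {n : ℕ} (f : Fin (4 * n) → Fin (4 * n)) (a : Fin (4 * n)) : ℕ :=
  {b : Fin (4 * n) | Cross f b ∧ a ≤ b}.ncard

/-- The cup diagram `C(w)` of a sequence: the non-crossing matching `f` of the
extended weight, where the middle-crossing arcs, taken from innermost outwards in
consecutive pairs, have two of their boundary points exchanged (the resulting pairs
of arcs being `linked`, i.e. decorated). `g` is the resulting pairing of endpoints. -/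
structure CupDiagram (n : ℕ) (α : Seq n) where
  f : Fin (4 * n) → Fin (4 * n)
  g : Fin (4 * n) → Fin (4 * n)
  matching : IsNC α f
  agree : ∀ i, ¬ Cross f i → ¬ Cross f (f i) → g i = f i
  link : ∀ a b, Cross f a → Cross f b → Odd (rank f a) → rank f b = rank f a + 1 →
    g a = f b ∧ g b = f a ∧ g (f b) = a ∧ g (f a) = b

/-- `g` is (the pairing underlying) the cup diagram of `α`. -/
def IsCupDiagram {n : ℕ} (α : Seq n) (g : Fin (4 * n) → Fin (4 * n)) : Prop :=
  ∃ D : CupDiagram n α, D.g = g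

/-- The arcs of the cup diagram starting at `a` and at `b` form a linked
(decorated) pair. -/
def CupDiagram.Linked {n : ℕ} {α : Seq n} (D : CupDiagram n α) (a b : Fin (4 * n)) : Prop :=
  Cross D.f a ∧ Cross D.f b ∧ Odd (rank D.f a) ∧ rank D.f b = rank D.f a + 1

/-- The weight `v` orients the (cup or cap) diagram `g`: every arc carries exactly one
`∧` and one `∨`. -/
def Orients {n : ℕ} (v : Seq n) (g : Fin (4 * n) → Fin (4 * n)) : Prop :=
  ∀ i, extLab v (g i) ≠ extLab v i

/-- The number of clockwise oriented cups (cups with `∧` at their left endpoint). -/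
noncomputable def clCount {n : ℕ} (v : Seq n) (g : Fin (4 * n) → Fin (4 * n)) : ℕ :=
  {i : Fin (4 * n) | i < g i ∧ extLab v i = true}.ncard

/-- The mirror (reflection through the middle vertical axis) of a point. -/
def mirror {n : ℕ} (i : Fin (4 * n)) : Fin (4 * n) :=
  ⟨4 * n - 1 - i.val, by have := i.isLt; omega⟩


namespace S3

variable {m : ℕ} (w : Fin m → Bool)

noncomputable def eps (t : ℕ) : ℤ :=
  if h : t < m then (if w ⟨t, h⟩ then -1 else 1) else 0

noncomputable def ht (k : ℕ) : ℤ := ∑ t ∈ Finset.range k, eps w t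

lemma ht_succ (k : ℕ) : ht w (k + 1) = ht w k + eps w k :=
  Finset.sum_range_succ _ _

lemma eps_of_lt {t : ℕ} (h : t < m) : eps w t = if w ⟨t, h⟩ then -1 else 1 := by
  simp [eps, h]

lemma eps_false {t : ℕ} (h : t < m) (hw : w ⟨t, h⟩ = false) : eps w t = 1 := by
  simp [eps, h, hw]

lemma eps_true {t : ℕ} (h : t < m) (hw : w ⟨t, h⟩ = true) : eps w t = -1 := by
  simp [eps, h, hw]

lemma eps_le (t : ℕ) : eps w t ≤ 1 := by
  unfold eps; split_ifs <;> omega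

lemma eps_ge (t : ℕ) : -1 ≤ eps w t := by
  unfold eps; split_ifs <;> omega

lemma lt_of_eps_ne {t : ℕ} (h : eps w t ≠ 0) : t < m := by
  by_contra hc; simp [eps, hc] at h

lemma ht_step_ge (k : ℕ) : ht w k - 1 ≤ ht w (k + 1) := by
  have := eps_ge w k; rw [ht_succ]; omega

lemma ht_step_le (k : ℕ) : ht w (k + 1) ≤ ht w k + 1 := by
  have := eps_le w k; rw [ht_succ]; omega

lemma ht_of_ge : ∀ {k : ℕ}, m ≤ k → ht w k = ht w m := by
  intro k hk
  induction k with
  | zero =>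
    have : m = 0 := by omega
    subst this; rfl
  | succ k ih =>
    rcases Nat.lt_or_ge m (k+1) with h | h
    · have hm : m ≤ k := by omega
      rw [ht_succ, ih hm]
      have : eps w k = 0 := by simp [eps, show ¬ k < m by omega]
      omega
    · have : m = k + 1 := by omega
      subst this; rfl

/-- Discrete IVT, descending version. -/
lemma ivt_down {a b : ℕ} {c : ℤ} (hab : a ≤ b) (ha : c ≤ ht w a) (hb : ht w b ≤ c) :
    ∃ k, a ≤ k ∧ k ≤ b ∧ ht w k = c := by
  by_cases h0 : ht w a ≤ c
  · exact ⟨a, le_refl _, hab, le_antisymm h0 ha⟩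
  have hex : ∃ k, a ≤ k ∧ ht w k ≤ c := ⟨b, hab, hb⟩
  classical
  have hk0 : a ≤ Nat.find hex ∧ ht w (Nat.find hex) ≤ c := Nat.find_spec hex
  have hk0b : Nat.find hex ≤ b := Nat.find_min' hex ⟨hab, hb⟩
  have hk0a : Nat.find hex ≠ a := by
    intro h; rw [h] at hk0; exact h0 hk0.2
  obtain ⟨k', hke⟩ : ∃ k', Nat.find hex = k' + 1 :=
    Nat.exists_eq_succ_of_ne_zero (by omega : Nat.find hex ≠ 0)
  rw [hke] at hk0 hk0b
  have hak' : a ≤ k' := by omega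
  have hk' : ¬ (a ≤ k' ∧ ht w k' ≤ c) := Nat.find_min hex (by omega)
  have hck' : c < ht w k' := by
    by_contra h; exact hk' ⟨hak', by omega⟩
  have := ht_step_ge w k'
  exact ⟨k' + 1, hk0.1, hk0b, by omega⟩

/-- Discrete IVT, ascending version. -/
lemma ivt_up {a b : ℕ} {c : ℤ} (hab : a ≤ b) (ha : ht w a ≤ c) (hb : c ≤ ht w b) :
    ∃ k, a ≤ k ∧ k ≤ b ∧ ht w k = c := by
  by_cases h0 : c ≤ ht w a
  · exact ⟨a, le_refl _, hab, le_antisymm ha h0⟩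
  have hex : ∃ k, a ≤ k ∧ c ≤ ht w k := ⟨b, hab, hb⟩
  classical
  have hk0 : a ≤ Nat.find hex ∧ c ≤ ht w (Nat.find hex) := Nat.find_spec hex
  have hk0b : Nat.find hex ≤ b := Nat.find_min' hex ⟨hab, hb⟩
  have hk0a : Nat.find hex ≠ a := by
    intro h; rw [h] at hk0; exact h0 hk0.2
  obtain ⟨k', hke⟩ : ∃ k', Nat.find hex = k' + 1 :=
    Nat.exists_eq_succ_of_ne_zero (by omega : Nat.find hex ≠ 0)
  rw [hke] at hk0 hk0b
  have hak' : a ≤ k' := by omega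
  have hk' : ¬ (a ≤ k' ∧ c ≤ ht w k') := Nat.find_min hex (by omega)
  have hck' : ht w k' < c := by
    by_contra h; exact hk' ⟨hak', by omega⟩
  have := ht_step_le w k'
  exact ⟨k' + 1, hk0.1, hk0b, by omega⟩

/-- `j` is the partner of `i`: first return of the height walk to level `ht i`. -/
def MatchRel (i j : ℕ) : Prop :=
  i < j ∧ ht w (j + 1) = ht w i ∧ ∀ k, i < k → k ≤ j → ht w i < ht w k

lemma matchRel_unique_right {i j1 j2 : ℕ} (h1 : MatchRel w i j1) (h2 : MatchRel w i j2) :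
    j1 = j2 := by
  rcases lt_trichotomy j1 j2 with h | h | h
  · have := h2.2.2 (j1 + 1) (by have := h1.1; omega) (by omega)
    rw [h1.2.1] at this; omega
  · exact h
  · have := h1.2.2 (j2 + 1) (by have := h2.1; omega) (by omega)
    rw [h2.2.1] at this; omega

lemma matchRel_unique_left {i1 i2 j : ℕ} (h1 : MatchRel w i1 j) (h2 : MatchRel w i2 j) :
    i1 = i2 := by
  rcases lt_trichotomy i1 i2 with h | h | h
  · have := h1.2.2 i2 h (le_of_lt h2.1)
    have e1 := h1.2.1; have e2 := h2.2.1; omega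
  · exact h
  · have := h2.2.2 i1 h (le_of_lt h1.1)
    have e1 := h1.2.1; have e2 := h2.2.1; omega

lemma matchRel_labels {i j : ℕ} (hj : j < m) (h : MatchRel w i j) :
    ∃ hi : i < m, w ⟨i, hi⟩ = false ∧ w ⟨j, hj⟩ = true := by
  have hi : i < m := lt_trans h.1 hj
  refine ⟨hi, ?_, ?_⟩
  · have h1 : ht w i < ht w (i + 1) := h.2.2 (i + 1) (by omega) h.1
    rw [ht_succ] at h1
    have := eps_of_lt w hi
    by_contra hc
    simp only [Bool.not_eq_false] at hc
    rw [hc] at this; simp at this; omega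
  · have h1 : ht w i < ht w j := h.2.2 j h.1 (le_refl _)
    have h2 := h.2.1
    rw [ht_succ] at h2
    have := eps_of_lt w hj
    by_contra hc
    simp only [Bool.not_eq_true] at hc
    rw [hc] at this; simp at this; omega

section Dyck

lemma closer_exists (h0 : ∀ k, 0 ≤ ht w k) (hm0 : ht w m = 0) {i : ℕ} (hi : i < m) (hwi : w ⟨i, hi⟩ = false) :
    ∃ j, j < m ∧ MatchRel w i j := by
  classical
  have hstep : ht w (i + 1) = ht w i + 1 := by
    rw [ht_succ, eps_false w hi hwi]
  have h2 : ht w i ≤ ht w (i + 2) := by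
    have h := ht_step_ge w (i + 1)
    rw [show i + 1 + 1 = i + 2 by omega] at h; omega
  have hb : ht w (m + i + 2) ≤ ht w i := by
    rw [ht_of_ge w (by omega), hm0]; exact h0 i
  obtain ⟨k1, hk1a, hk1b, hk1c⟩ := ivt_down w (by omega : i + 2 ≤ m + i + 2) h2 hb
  have hex : ∃ k, i + 2 ≤ k ∧ ht w k = ht w i := ⟨k1, hk1a, hk1c⟩
  have hspec := Nat.find_spec hex
  set K := Nat.find hex with hK
  -- minimality strengthened: all heights strictly above on (i, K)
  have hmin : ∀ k, i < k → k < K → ht w i < ht w k := by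
    intro k hik hkK
    by_contra hc
    push_neg at hc
    obtain ⟨k', hk'1, hk'2, hk'3⟩ := ivt_down w (by omega : i + 1 ≤ k) (by omega) hc
    have hne : k' ≠ i + 1 := by
      intro h; rw [h, hstep] at hk'3; omega
    have : ¬ (i + 2 ≤ k' ∧ ht w k' = ht w i) := Nat.find_min hex (by omega)
    exact this ⟨by omega, hk'3⟩
  have hKi : i + 2 ≤ K := hspec.1
  refine ⟨K - 1, ?_, by omega, ?_, ?_⟩
  · -- K - 1 < m
    have h1 : ht w i < ht w (K - 1) := hmin (K - 1) (by omega) (by omega)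
    have h2 : ht w ((K - 1) + 1) = ht w i := by
      rw [show K - 1 + 1 = K by omega]; exact hspec.2
    have heps : eps w (K - 1) ≠ 0 := by
      rw [ht_succ] at h2; omega
    exact lt_of_eps_ne w heps
  · rw [show K - 1 + 1 = K by omega]; exact hspec.2
  · intro k hk1 hk2
    exact hmin k hk1 (by omega)

lemma opener_exists (h0 : ∀ k, 0 ≤ ht w k) {j : ℕ} (hj : j < m) (hwj : w ⟨j, hj⟩ = true) :
    ∃ i, MatchRel w i j := by
  classical
  have hstep : ht w (j + 1) = ht w j - 1 := by
    rw [ht_succ, eps_true w hj hwj]; ring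
  set c := ht w (j + 1) with hc
  have hc0 : 0 ≤ c := h0 (j + 1)
  have h00 : ht w 0 ≤ c := by
    simp only [ht, Finset.range_zero, Finset.sum_empty]; exact hc0
  have hjc : c ≤ ht w j := by omega
  obtain ⟨k1, _, hk1b, hk1c⟩ := ivt_up w (Nat.zero_le j) h00 hjc
  set L := Nat.findGreatest (fun k => ht w k = c) j with hL
  have hLs : ht w L = c := by
    have := Nat.findGreatest_spec (P := fun k => ht w k = c) hk1b hk1c
    simpa [hL] using this
  have hLj : L ≤ j := Nat.findGreatest_le j
  have hLnej : L ≠ j := by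
    intro h; rw [h] at hLs; omega
  have hmax : ∀ k, L < k → k ≤ j → ht w k ≠ c := by
    intro k h1 h2
    exact Nat.findGreatest_is_greatest (P := fun k => ht w k = c) h1 h2
  refine ⟨L, by omega, by omega, ?_⟩
  intro k hk1 hk2
  by_contra hcon
  push_neg at hcon
  rw [hLs] at hcon
  obtain ⟨k', hk'1, hk'2, hk'3⟩ := ivt_up w hk2 hcon hjc
  exact hmax k' (by omega) hk'2 hk'3

def PRel (i j : ℕ) : Prop := MatchRel w i j ∨ MatchRel w j i

variable (h0 : ∀ k, 0 ≤ ht w k) (hm0 : ht w m = 0)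

include h0 hm0

lemma pRel_exists (i : Fin m) : ∃ j : Fin m, PRel w i.val j.val := by
  cases hw : w i with
  | false =>
    obtain ⟨j, hj, hmr⟩ := closer_exists w h0 hm0 i.isLt (by rwa [Fin.eta])
    exact ⟨⟨j, hj⟩, Or.inl hmr⟩
  | true =>
    obtain ⟨j, hmr⟩ := opener_exists w h0 i.isLt (by rwa [Fin.eta])
    exact ⟨⟨j, lt_trans hmr.1 i.isLt⟩, Or.inr hmr⟩

omit h0 hm0 in
lemma pRel_unique {i j1 j2 : ℕ} (hj1 : j1 < m) (hj2 : j2 < m)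
    (h1 : PRel w i j1) (h2 : PRel w i j2) : j1 = j2 := by
  rcases h1 with h1 | h1 <;> rcases h2 with h2 | h2
  · exact matchRel_unique_right w h1 h2
  · obtain ⟨hi1, hw1, _⟩ := matchRel_labels w hj1 h1
    obtain ⟨_, _, hw2⟩ := matchRel_labels w hi1 h2
    simp [hw2] at hw1
  · obtain ⟨hi2, hw2, _⟩ := matchRel_labels w hj2 h2
    obtain ⟨_, _, hw1⟩ := matchRel_labels w hi2 h1
    simp [hw1] at hw2
  · exact matchRel_unique_left w h1 h2

noncomputable def ncF (i : Fin m) : Fin m :=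
  (pRel_exists w h0 hm0 i).choose

lemma ncF_spec (i : Fin m) : PRel w i.val (ncF w h0 hm0 i).val :=
  (pRel_exists w h0 hm0 i).choose_spec

lemma ncF_eq_of {i j : Fin m} (h : PRel w i.val j.val) : ncF w h0 hm0 i = j :=
  Fin.ext (pRel_unique w (ncF w h0 hm0 i).isLt j.isLt (ncF_spec w h0 hm0 i) h)

lemma ncF_invol (i : Fin m) : ncF w h0 hm0 (ncF w h0 hm0 i) = i := by
  apply ncF_eq_of
  rcases ncF_spec w h0 hm0 i with h | h
  · exact Or.inr h
  · exact Or.inl h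

lemma ncF_nofix (i : Fin m) : ncF w h0 hm0 i ≠ i := by
  intro h
  rcases ncF_spec w h0 hm0 i with hs | hs <;> rw [h] at hs <;> exact absurd hs.1 (lt_irrefl _)

lemma ncF_matchRel {i : Fin m} (h : i < ncF w h0 hm0 i) :
    MatchRel w i.val (ncF w h0 hm0 i).val := by
  rcases ncF_spec w h0 hm0 i with hs | hs
  · exact hs
  · exact absurd hs.1 (by simp only [not_lt]; exact le_of_lt h)

lemma ncF_isMatching_noncross :
    ∀ a b : Fin m, a < ncF w h0 hm0 a → b < ncF w h0 hm0 b → a < b → b < ncF w h0 hm0 a →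
      ncF w h0 hm0 b < ncF w h0 hm0 a := by
  intro a b ha hb hab hbfa
  have hma := ncF_matchRel w h0 hm0 ha
  have hmb := ncF_matchRel w h0 hm0 hb
  by_contra hc
  push_neg at hc
  have hne : ncF w h0 hm0 a ≠ ncF w h0 hm0 b := by
    intro h
    have := congrArg (ncF w h0 hm0) h
    rw [ncF_invol, ncF_invol] at this
    exact absurd this (by intro hh; rw [hh] at hab; exact lt_irrefl _ hab)
  have hlt : (ncF w h0 hm0 a).val < (ncF w h0 hm0 b).val :=
    lt_of_le_of_ne hc (fun h => hne (Fin.ext h))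
  have h1 : ht w b.val < ht w ((ncF w h0 hm0 a).val + 1) := by
    apply hmb.2.2
    · exact lt_trans hbfa (by omega)
    · omega
  rw [hma.2.1] at h1
  have h2 : ht w a.val < ht w b.val := hma.2.2 b.val hab (le_of_lt hbfa)
  omega

end Dyck

section Unique

variable (g : Fin m → Fin m)

/-- `g` as a function on `ℕ`. -/
noncomputable def gn (t : ℕ) : ℕ := if h : t < m then (g ⟨t, h⟩).val else t

lemma gn_of_lt {t : ℕ} (h : t < m) : gn g t = (g ⟨t, h⟩).val := dif_pos h

variable (hinv : ∀ i, g (g i) = i) (hnf : ∀ i, g i ≠ i)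
  (hnc : ∀ a b : Fin m, a < g a → b < g b → a < b → b < g a → g b < g a)
  (hor : ∀ i, i < g i → w i = false ∧ w (g i) = true)

include hinv hnf hnc in
/-- Interval invariance: points strictly under an arc are matched strictly under it. -/
lemma intv {i k : Fin m} (hij : i < g i) (h1 : i < k) (h2 : k < g i) :
    i < g k ∧ g k < g i := by
  have hki : k ≠ i := ne_of_gt h1
  have hkj : k ≠ g i := ne_of_lt h2
  have hgki : g k ≠ i := fun h => hkj (by rw [← h, hinv])
  have hgkj : g k ≠ g i := fun h => hki (by
    have := congrArg g h; rwa [hinv, hinv] at this)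
  rcases lt_or_gt_of_ne (hnf k) with hc | hc
  · -- g k < k
    refine ⟨?_, lt_trans hc h2⟩
    by_contra hcon
    push_neg at hcon
    have hgklt : g k < i := lt_of_le_of_ne hcon hgki
    have hk2 : g k < g (g k) := by rw [hinv]; exact hc
    have hik : i < g (g k) := by rw [hinv]; exact h1
    have := hnc (g k) i hk2 hij hgklt hik
    rw [hinv] at this
    exact absurd h2 (not_lt_of_gt this)
  · -- k < g k
    exact ⟨lt_trans h1 hc, hnc i k hij hc h1 h2⟩

include hinv hnf hor in
lemma sum_eps_zero (s : Finset ℕ) (hsub : ∀ t ∈ s, t < m)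
    (hcl : ∀ t ∈ s, gn g t ∈ s) : ∑ t ∈ s, eps w t = 0 := by
  refine Finset.sum_involution (fun t _ => gn g t) ?_ ?_ hcl ?_
  · intro t hts
    have htm := hsub t hts
    show eps w t + eps w (gn g t) = 0
    rw [gn_of_lt g htm]
    rcases lt_or_gt_of_ne (hnf ⟨t, htm⟩) with hc | hc
    · -- g t < t
      obtain ⟨hw1, hw2⟩ := hor (g ⟨t, htm⟩) (by rw [hinv]; exact hc)
      rw [hinv] at hw2
      rw [eps_true w htm hw2, eps_false w (g ⟨t, htm⟩).isLt (by rw [Fin.eta]; exact hw1)]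
      ring
    · -- t < g t
      obtain ⟨hw1, hw2⟩ := hor ⟨t, htm⟩ hc
      rw [eps_false w htm hw1, eps_true w (g ⟨t, htm⟩).isLt (by rw [Fin.eta]; exact hw2)]
      ring
  · intro t hts _
    have htm := hsub t hts
    show gn g t ≠ t
    rw [gn_of_lt g htm]
    intro h
    exact hnf ⟨t, htm⟩ (Fin.ext h)
  · intro t hts
    have htm := hsub t hts
    show gn g (gn g t) = t
    have h2 : gn g t < m := by rw [gn_of_lt g htm]; exact (g ⟨t, htm⟩).isLt
    rw [gn_of_lt g h2]
    have he : (⟨gn g t, h2⟩ : Fin m) = g ⟨t, htm⟩ := Fin.ext (gn_of_lt g htm)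
    rw [he, hinv]

include hinv hnf hnc hor in
lemma nc_balance {i : Fin m} (hij : i < g i) :
    ht w ((g i).val + 1) = ht w i.val := by
  have hij' : i.val < (g i).val := hij
  have hsum : ∑ t ∈ Finset.Ico i.val ((g i).val + 1), eps w t = 0 := by
    apply sum_eps_zero w g hinv hnf hor
    · intro t hts
      rw [Finset.mem_Ico] at hts
      have := (g i).isLt; omega
    · intro t hts
      rw [Finset.mem_Ico] at hts
      have htm : t < m := by have := (g i).isLt; omega
      rw [Finset.mem_Ico, gn_of_lt g htm]
      rcases eq_or_lt_of_le hts.1 with he | hlt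
      · -- t = i.val
        have : (⟨t, htm⟩ : Fin m) = i := Fin.ext he.symm
        rw [this]; omega
      · rcases eq_or_lt_of_le (Nat.lt_succ_iff.mp hts.2) with he | hlt2
        · -- t = (g i).val
          have : (⟨t, htm⟩ : Fin m) = g i := Fin.ext he
          rw [this, hinv]
          omega
        · obtain ⟨ha, hb⟩ := intv g hinv hnf hnc hij
            (show i < ⟨t, htm⟩ from hlt) (show (⟨t, htm⟩ : Fin m) < g i from hlt2)
          have ha' : i.val < (g ⟨t, htm⟩).val := ha
          have hb' : (g ⟨t, htm⟩).val < (g i).val := hb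
          omega
  have hs2 := Finset.sum_Ico_eq_sub (eps w) (by omega : i.val ≤ (g i).val + 1)
  rw [hsum] at hs2
  unfold ht
  omega

include hinv hnf hnc hor in
lemma nc_bound {i : Fin m} (hij : i < g i) :
    ∀ k, i.val < k → k ≤ (g i).val → ht w i.val < ht w k := by
  intro k hk1 hk2
  have hij' : i.val < (g i).val := hij
  have hjm := (g i).isLt
  obtain ⟨hwi, -⟩ := hor i hij
  have hstep : ht w (i.val + 1) = ht w i.val + 1 := by
    rw [ht_succ, eps_false w i.isLt (by rw [Fin.eta]; exact hwi)]
  have hsumA : ∑ t ∈ (Finset.Ico (i.val + 1) k).filter (fun t => gn g t < k), eps w t = 0 := by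
    apply sum_eps_zero w g hinv hnf hor
    · intro t hts
      rw [Finset.mem_filter, Finset.mem_Ico] at hts
      omega
    · intro t hts
      rw [Finset.mem_filter, Finset.mem_Ico] at hts
      obtain ⟨⟨ht1, ht2⟩, ht3⟩ := hts
      have htm : t < m := by omega
      have htj : t < (g i).val := by omega
      obtain ⟨ha, hb⟩ := intv g hinv hnf hnc hij
        (show i < ⟨t, htm⟩ from Nat.lt_of_succ_le ht1)
        (show (⟨t, htm⟩ : Fin m) < g i from htj)
      have ha' : i.val < (g ⟨t, htm⟩).val := ha
      rw [Finset.mem_filter, Finset.mem_Ico]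
      rw [gn_of_lt g htm] at ht3 ⊢
      have hgm : (g ⟨t, htm⟩).val < m := (g _).isLt
      have hback : gn g ((g ⟨t, htm⟩).val) = t := by
        rw [gn_of_lt g hgm,
          show (⟨(g ⟨t, htm⟩).val, hgm⟩ : Fin m) = g ⟨t, htm⟩ from Fin.eta _ hgm, hinv]
      rw [hback]
      exact ⟨⟨by omega, ht3⟩, by omega⟩
  have hsumB : 0 ≤ ∑ t ∈ (Finset.Ico (i.val + 1) k).filter (fun t => ¬ gn g t < k), eps w t := by
    apply Finset.sum_nonneg
    intro t hts
    rw [Finset.mem_filter, Finset.mem_Ico] at hts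
    obtain ⟨⟨ht1, ht2⟩, ht3⟩ := hts
    have htm : t < m := by omega
    rw [gn_of_lt g htm] at ht3
    have htlt : (⟨t, htm⟩ : Fin m) < g ⟨t, htm⟩ := show t < (g ⟨t, htm⟩).val by omega
    obtain ⟨hw1, -⟩ := hor _ htlt
    rw [eps_false w htm hw1]
    omega
  have hsplit := Finset.sum_filter_add_sum_filter_not (Finset.Ico (i.val + 1) k)
    (fun t => gn g t < k) (eps w)
  have htot := Finset.sum_Ico_eq_sub (eps w) (show i.val + 1 ≤ k by omega)
  rw [hsumA] at hsplit
  unfold ht at *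
  omega

include hinv hnf hnc hor in
lemma nc_matchRel {i : Fin m} (hij : i < g i) : MatchRel w i.val (g i).val :=
  ⟨hij, nc_balance w g hinv hnf hnc hor hij, nc_bound w g hinv hnf hnc hor hij⟩

end Unique

end S3
section ExtLab

variable {n : ℕ} (α : Seq n)

lemma mirror_label (t : ℕ) (h : t < 4 * n) :
    extLab α ⟨4 * n - 1 - t, by omega⟩ = ! extLab α ⟨t, h⟩ := by
  simp only [extLab]
  split_ifs <;> simp_all <;> try omega
  all_goals (congr 1; exact Fin.ext (by simp only [Fin.val_mk]; omega))

lemma eps_antisym (t : ℕ) (h : t < 4 * n) :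
    S3.eps (extLab α) (4 * n - 1 - t) = - S3.eps (extLab α) t := by
  rw [S3.eps_of_lt _ (by omega : 4 * n - 1 - t < 4 * n), S3.eps_of_lt _ h,
    mirror_label α t h]
  cases extLab α ⟨t, h⟩ <;> simp

lemma ht_total : S3.ht (extLab α) (4 * n) = 0 := by
  have h1 := Finset.sum_range_reflect (S3.eps (extLab α)) (4 * n)
  have h2 : ∀ j ∈ Finset.range (4 * n),
      S3.eps (extLab α) (4 * n - 1 - j) = - S3.eps (extLab α) j :=
    fun j hj => eps_antisym α j (Finset.mem_range.mp hj)
  rw [Finset.sum_congr rfl h2, Finset.sum_neg_distrib] at h1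
  unfold S3.ht
  omega

lemma ht_reflect (k : ℕ) (hk : k ≤ 4 * n) :
    S3.ht (extLab α) (4 * n - k) = S3.ht (extLab α) k := by
  rcases Nat.eq_zero_or_pos k with rfl | hk0
  · rw [Nat.sub_zero, show S3.ht (extLab α) 0 = 0 from by simp [S3.ht]]
    exact ht_total α
  have hs1 := Finset.sum_Ico_eq_sub (S3.eps (extLab α)) (show 4*n-k ≤ 4*n by omega)
  have hs2 := Finset.sum_Ico_eq_sum_range (f := S3.eps (extLab α)) (m := 4*n-k) (n := 4*n)
  rw [show 4*n - (4*n-k) = k by omega] at hs2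
  have hs3 : ∑ j ∈ Finset.range k, S3.eps (extLab α) (4*n-k+j)
      = ∑ j ∈ Finset.range k, - S3.eps (extLab α) j := by
    rw [← Finset.sum_range_reflect]
    apply Finset.sum_congr rfl
    intro j hj
    rw [Finset.mem_range] at hj
    show S3.eps (extLab α) (4*n-k+(k-1-j)) = - S3.eps (extLab α) j
    rw [show 4*n-k+(k-1-j) = 4*n-1-j by omega]
    exact eps_antisym α j (by omega)
  rw [Finset.sum_neg_distrib] at hs3
  have ht4 := ht_total α
  unfold S3.ht at *
  omega

lemma ht_first (k : ℕ) (hk : k ≤ n) : S3.ht (extLab α) k = k := by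
  induction k with
  | zero => simp [S3.ht]
  | succ k ih =>
    rw [S3.ht_succ, ih (by omega)]
    have hl : extLab α ⟨k, by omega⟩ = false := by
      simp only [extLab]
      rw [dif_pos (show k < n by omega)]
    rw [S3.eps_false _ (by omega) hl]
    push_cast; ring

lemma ht_ge_sub (w : Fin (4 * n) → Bool) (a d : ℕ) :
    S3.ht w a - d ≤ S3.ht w (a + d) := by
  induction d with
  | zero => simp
  | succ d ih =>
    have hstep := S3.ht_step_ge w (a + d)
    show S3.ht w a - ((d : ℤ) + 1) ≤ S3.ht w (a + d + 1)
    omega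

lemma ht_nonneg (k : ℕ) : 0 ≤ S3.ht (extLab α) k := by
  have half : ∀ j, j ≤ 2 * n → 0 ≤ S3.ht (extLab α) j := by
    intro j hj
    rcases le_or_gt j n with h1 | h1
    · rw [ht_first α j h1]; positivity
    · have hd := ht_ge_sub (extLab α) n (j - n)
      rw [show n + (j - n) = j by omega, ht_first α n (le_refl _)] at hd
      omega
  rcases le_or_gt k (2 * n) with h1 | h1
  · exact half k h1
  rcases le_or_gt k (4 * n) with h2 | h2
  · rw [← ht_reflect α k h2]
    exact half _ (by omega)
  · rw [S3.ht_of_ge _ (by omega : 4 * n ≤ k), ht_total α]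

end ExtLab

/-- For any `{+,-}`-sequence `α` of length `n`, extended by `n` pluses
on the left and `n` minuses on the right (and by the antisymmetric part), there exists a
unique non-crossing perfect matching of the `4n` points in which every arc connects a
`+` with a `-` and the endpoint labelled `+` has smaller index than the one labelled `-`. -/


theorem statement_3 (n : ℕ) (α : Seq n) :
    ∃! f : Fin (4 * n) → Fin (4 * n), IsNC α f := by
  have h0 := ht_nonneg α
  have hm0 := ht_total α
  refine ⟨S3.ncF (extLab α) h0 hm0, ⟨⟨?_, ?_, ?_⟩, ?_⟩, ?_⟩
  · exact S3.ncF_invol _ h0 hm0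
  · exact S3.ncF_nofix _ h0 hm0
  · exact S3.ncF_isMatching_noncross _ h0 hm0
  · intro i hi
    obtain ⟨hi', hw1, hw2⟩ := S3.matchRel_labels (extLab α)
      (S3.ncF (extLab α) h0 hm0 i).isLt (S3.ncF_matchRel _ h0 hm0 hi)
    exact ⟨by simpa using hw1, by simpa using hw2⟩
  · intro g hg
    obtain ⟨⟨hinv, hnf, hnc⟩, hor⟩ := hg
    funext i
    rcases lt_trichotomy i (g i) with hlt | heq | hgt
    · exact (S3.ncF_eq_of _ h0 hm0
        (Or.inl (S3.nc_matchRel _ g hinv hnf hnc hor hlt))).symm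
    · exact absurd heq.symm (hnf i)
    · have hlt' : g i < g (g i) := by rw [hinv]; exact hgt
      have h1 : S3.ncF (extLab α) h0 hm0 (g i) = i := by
        have hmr := S3.nc_matchRel _ g hinv hnf hnc hor hlt'
        rw [hinv] at hmr
        exact S3.ncF_eq_of _ h0 hm0 (Or.inl hmr)
      calc g i = S3.ncF (extLab α) h0 hm0 (S3.ncF (extLab α) h0 hm0 (g i)) :=
            (S3.ncF_invol _ h0 hm0 _).symm
        _ = S3.ncF (extLab α) h0 hm0 i := by rw [h1]

end TypeD
end

section
/- The map sending w ∈ W^p to its cup diagram C(w) is a bijection from W^p onto the set C(W^p) of cup diagrams. -/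
namespace TypeD

attribute [local instance] Classical.propDecidable

/-- A finset admitting a fixed-point-free involution has even cardinality. -/
lemma even_card_of_invol {β : Type*} [DecidableEq β] :
    ∀ (T : Finset β) (f : β → β), (∀ i ∈ T, f i ∈ T) → (∀ i ∈ T, f (f i) = i) →
      (∀ i ∈ T, f i ≠ i) → Even T.card := by
  intro T
  induction T using Finset.strongInduction with
  | _ T ih =>
    intro f h1 h2 h3
    rcases T.eq_empty_or_nonempty with rfl | ⟨x, hx⟩
    · simp
    · have hfx : f x ∈ T := h1 x hx
      have hne : f x ≠ x := h3 x hx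
      set T' := (T.erase x).erase (f x) with hT'
      have hsubset : T' ⊆ T := fun i hi =>
        Finset.mem_of_mem_erase (Finset.mem_of_mem_erase hi)
      have hmem : ∀ i, i ∈ T' ↔ i ∈ T ∧ i ≠ x ∧ i ≠ f x := by
        intro i
        simp only [hT', Finset.mem_erase]
        tauto
      have hssub : T' ⊂ T := by
        refine Finset.ssubset_iff_of_subset hsubset |>.mpr ⟨x, hx, ?_⟩
        simp [hmem]
      have hev : Even T'.card := by
        refine ih T' hssub f ?_ ?_ ?_
        · intro i hi
          rw [hmem] at hi ⊢
          obtain ⟨hiT, hix, hifx⟩ := hi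
          refine ⟨h1 i hiT, ?_, ?_⟩
          · intro h; apply hifx; rw [← h2 i hiT, h]
          · intro h; apply hix
            have := congrArg f h
            rwa [h2 i hiT, h2 x hx] at this
        · intro i hi; exact h2 i (hsubset hi)
        · intro i hi; exact h3 i (hsubset hi)
      have hcard : T.card = T'.card + 2 := by
        have e1 : (T.erase x).card = T.card - 1 := Finset.card_erase_of_mem hx
        have e2 : T'.card = (T.erase x).card - 1 :=
          Finset.card_erase_of_mem (Finset.mem_erase.mpr ⟨hne, hfx⟩)
        have hpos : 0 < T.card := Finset.card_pos.mpr ⟨x, hx⟩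
        have hpos2 : 0 < (T.erase x).card :=
          Finset.card_pos.mpr ⟨f x, Finset.mem_erase.mpr ⟨hne, hfx⟩⟩
        omega
      rw [hcard]
      obtain ⟨k, hk⟩ := hev
      exact ⟨k + 1, by omega⟩

/-- In a finset of a linear order, every rank between `1` and the cardinality is
attained, where the rank of `a` is the number of elements `≥ a`. -/
lemma exists_rank {β : Type*} [LinearOrder β] [DecidableEq β] :
    ∀ (m : ℕ) (S : Finset β), 1 ≤ m → m ≤ S.card →
      ∃ a ∈ S, (S.filter (fun b => a ≤ b)).card = m := by
  intro m
  induction m with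
  | zero => omega
  | succ m ih =>
    intro S _ hm
    have hne : S.Nonempty := Finset.card_pos.mp (by omega)
    set M := S.max' hne with hM
    by_cases hm0 : m = 0
    · subst hm0
      refine ⟨M, S.max'_mem hne, ?_⟩
      have : S.filter (fun b => M ≤ b) = {M} := by
        ext b
        simp only [Finset.mem_filter, Finset.mem_singleton]
        constructor
        · rintro ⟨hb, hMb⟩
          exact le_antisymm (S.le_max' b hb) hMb
        · rintro rfl
          exact ⟨S.max'_mem hne, le_refl _⟩
      rw [this, Finset.card_singleton]
    · have h1m : 1 ≤ m := by omega
      set S' := S.erase M with hS'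
      have hMS : M ∈ S := S.max'_mem hne
      have hcard' : m ≤ S'.card := by
        rw [hS', Finset.card_erase_of_mem hMS]; omega
      obtain ⟨a, haS', hrank⟩ := ih S' h1m hcard'
      have haS : a ∈ S := Finset.mem_of_mem_erase haS'
      refine ⟨a, haS, ?_⟩
      have hkey : S.filter (fun b => a ≤ b) = insert M (S'.filter (fun b => a ≤ b)) := by
        ext b
        simp only [Finset.mem_filter, Finset.mem_insert, hS', Finset.mem_erase]
        constructor
        · rintro ⟨hb, hab⟩
          by_cases hbM : b = M
          · exact Or.inl hbM
          · exact Or.inr ⟨⟨hbM, hb⟩, hab⟩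
        · rintro (rfl | ⟨⟨_, hb⟩, hab⟩)
          · exact ⟨hMS, S.le_max' a haS⟩
          · exact ⟨hb, hab⟩
      have hMnot : M ∉ S'.filter (fun b => a ≤ b) := by
        simp [hS', Finset.mem_filter]
      rw [hkey, Finset.card_insert_of_notMem hMnot, hrank]

/-- For a non-crossing matching of the extended weight, the label of a point is a minus
iff the point is the right endpoint of its arc. -/
lemma lab_iff {n : ℕ} {α : Seq n} {f : Fin (4 * n) → Fin (4 * n)} (h : IsNC α f)
    (j : Fin (4 * n)) : extLab α j = true ↔ f j < j := by
  obtain ⟨hm, hlab⟩ := h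
  rcases lt_trichotomy (f j) j with hlt | heq | hgt
  · constructor
    · intro _; exact hlt
    · intro _
      have := hlab (f j) (by rw [hm.invol]; exact hlt)
      rw [hm.invol] at this
      exact this.2
  · exact absurd heq (hm.nofix j)
  · constructor
    · intro ht
      have := (hlab j hgt).1
      rw [this] at ht; exact absurd ht (by simp)
    · intro h'; exact absurd (h'.trans hgt) (lt_irrefl _)

/-- The rank as a Finset cardinality. -/
lemma rank_eq {n : ℕ} (f : Fin (4 * n) → Fin (4 * n)) (a : Fin (4 * n)) :
    rank f a = ((Finset.univ.filter (fun b => Cross f b)).filter (fun b => a ≤ b)).card := by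
  rw [rank, ← Set.ncard_coe_finset]
  congr 1
  ext b
  simp [Finset.mem_filter, and_comm]

/-- Key lemma: the pairing `g` of a cup diagram sends left endpoints to the right and
vice versa, in exactly the same way as the underlying matching `f`. -/
lemma g_lt_iff {n : ℕ} (hn : 0 < n) {α : Seq n} (D : CupDiagram n α) (i : Fin (4 * n)) :
    i < D.g i ↔ i < D.f i := by
  classical
  set f := D.f with hf
  have hmatch : IsMatching f := D.matching.1
  set S : Finset (Fin (4 * n)) := Finset.univ.filter (fun b => Cross f b) with hS
  have hmemS : ∀ b, b ∈ S ↔ Cross f b := by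
    intro b; simp [hS]
  -- cardinality of S is even
  have hSeven : Even S.card := by
    set T : Finset (Fin (4 * n)) :=
      Finset.univ.filter (fun i => i.val < 2 * n ∧ ¬ Cross f i) with hT
    have hmemT : ∀ b, b ∈ T ↔ b.val < 2 * n ∧ ¬ Cross f b := by
      intro b; simp [hT]
    have hTeven : Even T.card := by
      apply even_card_of_invol T f
      · intro i hi
        rw [hmemT] at hi ⊢
        obtain ⟨h1, h2⟩ := hi
        have hfi : (f i).val < 2 * n := by
          by_contra hcon
          exact h2 ⟨h1, by omega⟩
        refine ⟨hfi, ?_⟩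
        rintro ⟨_, hge⟩
        rw [hmatch.invol] at hge
        omega
      · intro i _; exact hmatch.invol i
      · intro i _; exact hmatch.nofix i
    have hunion : Finset.Iio (⟨2 * n, by omega⟩ : Fin (4 * n)) = S ∪ T := by
      ext b
      simp only [Finset.mem_Iio, Finset.mem_union, hmemS b, hmemT b, Cross]
      constructor
      · intro hb
        have hb' : b.val < 2 * n := hb
        by_cases hc : 2 * n ≤ (f b).val
        · exact Or.inl ⟨hb', hc⟩
        · exact Or.inr ⟨hb', fun h => hc h.2⟩
      · rintro (⟨hb, _⟩ | ⟨hb, _⟩) <;> exact hb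
    have hdisj : Disjoint S T := by
      rw [Finset.disjoint_left]
      intro b hbS hbT
      rw [hmemS] at hbS
      rw [hmemT] at hbT
      exact hbT.2 hbS
    have hcardIio : (Finset.Iio (⟨2 * n, by omega⟩ : Fin (4 * n))).card = 2 * n :=
      Fin.card_Iio _
    have : S.card + T.card = 2 * n := by
      rw [← Finset.card_union_of_disjoint hdisj, ← hunion, hcardIio]
    rw [Nat.even_iff] at hTeven ⊢
    omega
  -- basic rank bounds
  have hrank_ge : ∀ a, Cross f a → 1 ≤ rank f a := by
    intro a ha
    rw [rank_eq]
    refine Finset.card_pos.mpr ⟨a, ?_⟩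
    rw [Finset.mem_filter, hmemS]
    exact ⟨ha, le_refl _⟩
  have hrank_le : ∀ a, rank f a ≤ S.card := by
    intro a
    rw [rank_eq]
    exact Finset.card_le_card (Finset.filter_subset _ _)
  have hex : ∀ m, 1 ≤ m → m ≤ S.card → ∃ a, Cross f a ∧ rank f a = m := by
    intro m h1 h2
    obtain ⟨a, haS, hr⟩ := exists_rank m S h1 h2
    rw [hmemS] at haS
    refine ⟨a, haS, ?_⟩
    rw [rank_eq]
    convert hr using 3
  -- key: images under g of endpoints of crossing arcs
  have hkey : ∀ a, Cross f a → 2 * n ≤ (D.g a).val ∧ (D.g (f a)).val < 2 * n := by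
    intro a ha
    rcases Nat.even_or_odd (rank f a) with heven | hodd
    · -- a is the outer arc of its pair
      have h2 : 2 ≤ rank f a := by
        have := hrank_ge a ha
        rw [Nat.even_iff] at heven
        omega
      have hodd' : Odd (rank f a - 1) := by
        rw [Nat.odd_iff]
        rw [Nat.even_iff] at heven
        omega
      obtain ⟨a', ha', hra'⟩ := hex (rank f a - 1) (by omega)
        (le_trans (by omega) (hrank_le a))
      have ho : Odd (rank D.f a') := by rw [← hf, hra']; exact hodd'
      have he : rank D.f a = rank D.f a' + 1 := by rw [← hf, hra']; omega
      obtain ⟨hg1, hg2, hg3, hg4⟩ := D.link a' a ha' ha ho he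
      constructor
      · rw [hg2]; exact ha'.2
      · rw [hg3]; exact ha'.1
    · -- a is the inner arc of its pair; rank f a < S.card since S.card even
      have hlt : rank f a + 1 ≤ S.card := by
        have h1 := hrank_le a
        rw [Nat.odd_iff] at hodd
        rw [Nat.even_iff] at hSeven
        omega
      obtain ⟨b, hb, hrb⟩ := hex (rank f a + 1) (by omega) hlt
      have ho : Odd (rank D.f a) := by rw [← hf]; exact hodd
      have he : rank D.f b = rank D.f a + 1 := by rw [← hf]; exact hrb
      obtain ⟨hg1, hg2, hg3, hg4⟩ := D.link a b ha hb ho he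
      constructor
      · rw [hg1]; exact hb.2
      · rw [hg4]; exact hb.1
  -- now the case analysis
  by_cases hi : Cross f i
  · obtain ⟨h1, _⟩ := hkey i hi
    have h2' := hi.1
    have h3' := hi.2
    constructor
    · intro _
      rw [Fin.lt_def]; omega
    · intro _
      rw [Fin.lt_def]; omega
  · by_cases hfi : Cross f (f i)
    · obtain ⟨_, h2⟩ := hkey (f i) hfi
      rw [hmatch.invol] at h2
      have hi2n : 2 * n ≤ i.val := by
        have := hfi.2
        rwa [hmatch.invol] at this
      constructor
      · intro h
        rw [Fin.lt_def] at h
        omega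
      · intro h
        rw [Fin.lt_def] at h
        have := hfi.1
        omega
    · rw [D.agree i hi hfi]

/-- The map sending `w ∈ W^p` (identified with a `{+,-}`-sequence of
length `n` with an even number of minuses) to its cup diagram `C(w)` is a bijection from
`W^p` onto the set `C(W^p)` of cup diagrams. -/
theorem statement_6 (n : ℕ) (hn : 4 ≤ n)
    (C : {α : Seq n // EvenMinus α} → (Fin (4 * n) → Fin (4 * n)))
    (hC : ∀ w, IsCupDiagram w.1 (C w)) :
    Set.BijOn C Set.univ (Set.range C) := by
  refine ⟨fun x _ => Set.mem_range_self x, ?_, fun y hy => ?_⟩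
  · -- injectivity
    intro w _ w' _ h
    obtain ⟨D, hD⟩ := hC w
    obtain ⟨D', hD'⟩ := hC w'
    have hg : D.g = D'.g := by rw [hD, hD', h]
    have hn0 : 0 < n := by omega
    have hlab : ∀ j, extLab w.1 j = extLab w'.1 j := by
      intro j
      have h1 := lab_iff D.matching j
      have h2 := lab_iff D'.matching j
      have t1 : D.f j < j ↔ ¬ j < D.g j := by
        rw [g_lt_iff hn0 D j]
        exact ⟨fun h' => lt_asymm h',
          fun h' => lt_of_le_of_ne (not_lt.mp h') (D.matching.1.nofix j)⟩
      have t2 : D'.f j < j ↔ ¬ j < D'.g j := by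
        rw [g_lt_iff hn0 D' j]
        exact ⟨fun h' => lt_asymm h',
          fun h' => lt_of_le_of_ne (not_lt.mp h') (D'.matching.1.nofix j)⟩
      have hiff : extLab w.1 j = true ↔ extLab w'.1 j = true := by
        rw [h1, h2, t1, t2, hg]
      rcases Bool.eq_false_or_eq_true (extLab w.1 j) with hb | hb <;>
        rcases Bool.eq_false_or_eq_true (extLab w'.1 j) with hb' | hb' <;>
        simp_all
    have hval : ∀ i : Fin n, w.1 i = w'.1 i := by
      intro i
      have hj := hlab ⟨2 * n + i.val, by have := i.isLt; omega⟩
      have c1 : ¬ (2 * n + i.val < n) := by omega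
      have c2 : ¬ (2 * n + i.val < 2 * n) := by omega
      have c3 : 2 * n + i.val < 3 * n := by have := i.isLt; omega
      simp only [extLab, dif_neg c1, dif_neg c2, dif_pos c3] at hj
      simp only [show 2 * n + i.val - 2 * n = i.val from by omega] at hj
      simpa using hj
    exact Subtype.ext (funext hval)
  · -- surjectivity onto the range
    obtain ⟨w, rfl⟩ := hy
    exact ⟨w, Set.mem_univ w, rfl⟩

end TypeD
end

section
/- Every element w of W^p (type D_n modulo type A_{n-1} parabolic) is Deodhar: for any reduced expression w = s_{i_1}···s_{i_k}, the parabolic Kazhdan-Lusztig basis element satisfies N̄_w = N̄_e C_{s_{i_1}} ··· C_{s_{i_k}}, where C_s = H_s + q. -/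
namespace TypeD

attribute [local instance] Classical.propDecidable

open LaurentPolynomial

/-- The ground ring `L = ℤ[q,q⁻¹]`. -/
abbrev L := LaurentPolynomial ℤ

/-- The variable `q`. -/
noncomputable def q : L := T 1

/-- The inverse variable `q⁻¹`. -/
noncomputable def qinv : L := T (-1)

/-- `W^p`, identified with `{+,-}`-sequences of length `n` with an even number of
minuses. -/
abbrev Wp (n : ℕ) := {α : Seq n // EvenMinus α}

/-- The parabolic Hecke module `N`, free over `L` on the standard basis `N_w`,
`w ∈ W^p`. -/
abbrev NMod (n : ℕ) := Wp n →₀ L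

/-- The element `1` of `Fin n` (junk if `n = 1`). -/
def idx1 {n : ℕ} (j : Fin n) : Fin n := ⟨1 % n, Nat.mod_lt 1 j.pos⟩

/-- The right action of the simple reflection `s_j` on sequences: for `j ≥ 1` it swaps
the entries at the (0-indexed) places `j-1` and `j`; `s_0` maps `(α₁, α₂, …)` to
`(-α₂, -α₁, …)`. -/
def sAct {n : ℕ} (j : Fin n) (α : Seq n) : Seq n :=
  if j.val = 0 then
    fun k => if k.val = 0 then !α (idx1 j) else if k.val = 1 then !α ⟨0, j.pos⟩ else α k
  else
    fun k =>
      if k.val = j.val - 1 then α j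
      else if k.val = j.val then α ⟨j.val - 1, by have := j.isLt; omega⟩
      else α k

/-- Right multiplication by `s_j` yields a longer element of `W^p`:
for `j ≥ 1` the entries at places `j-1`, `j` read `-+`; for `j = 0` the first two
entries read `++`. -/
def upMove {n : ℕ} (j : Fin n) (α : Seq n) : Prop :=
  if j.val = 0 then α ⟨0, j.pos⟩ = false ∧ α (idx1 j) = false
  else α ⟨j.val - 1, by have := j.isLt; omega⟩ = true ∧ α j = false

/-- Right multiplication by `s_j` yields a shorter element of `W^p`. -/
def downMove {n : ℕ} (j : Fin n) (α : Seq n) : Prop :=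
  if j.val = 0 then α ⟨0, j.pos⟩ = true ∧ α (idx1 j) = true
  else α ⟨j.val - 1, by have := j.isLt; omega⟩ = false ∧ α j = true

/-- The action of the Kazhdan–Lusztig generator `C_{s_j} = H_{s_j} + q` on the parabolic
Hecke module `N` in the standard basis:
`N_w C_s = N_{ws} + q N_w` if `ws ∈ W^p` is longer, `N_w C_s = N_{ws} + q⁻¹ N_w` if
`ws ∈ W^p` is shorter, and `N_w C_s = 0` if `ws ∉ W^p`. -/
noncomputable def Cact {n : ℕ} (j : Fin n) (x : NMod n) : NMod n :=
  x.sum fun w c =>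
    if upMove j w.1 then
      (if he : EvenMinus (sAct j w.1) then
        c • (Finsupp.single (⟨sAct j w.1, he⟩ : Wp n) (1 : L) + Finsupp.single w q) else 0)
    else if downMove j w.1 then
      (if he : EvenMinus (sAct j w.1) then
        c • (Finsupp.single (⟨sAct j w.1, he⟩ : Wp n) (1 : L) + Finsupp.single w qinv) else 0)
    else 0

/-- The identity coset `e ∈ W^p`, i.e. the all-plus sequence. -/
def eW (n : ℕ) : Wp n :=
  ⟨fun _ => false, by
    have h : {i : Fin n | (fun _ : Fin n => false) i = true} = (∅ : Set (Fin n)) := by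
      ext i; simp
    unfold EvenMinus
    rw [h]
    simp⟩

/-- `UpChain l α β` : applying the simple reflections of `l` successively on the right
of `α` gives a chain of length-increasing moves ending in `β`.  Such words are exactly
the reduced expressions relevant for `W^p`. -/
def UpChain {n : ℕ} : List (Fin n) → Seq n → Seq n → Prop
  | [], α, β => α = β
  | j :: l, α, β => upMove j α ∧ UpChain l (sAct j α) β

/-!
Multiply `N_e` by the `C_{s_j}` of the up-chain one at a time. Each partial product is a cup sum
`∑_{S ⊆ P} q^{|S|} N_{w_S}`, where `w` is the current element, `P` is a set of pairwise disjoint cups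
(pairs of positions `i < k` with a minus of `w` at `k`), and `w_S` is `w` with the signs at the ends
of the cups of `S` reversed. If `s_j` changes the signs at the positions `a < b`, then `C_{s_j}`
only interacts with the cups through `a` or `b`: with no such cup the cup `(a, b)` is added, a single
such cup is replaced by `(a, b)`, and two such cups are rejoined into `(a, b)` and a cup on their
other two ends.

The final cup sum is bar invariant (the bar involution commutes with the `C_s` and fixes `N_e`), has
coefficient `1` at `N_w` and coefficients in `qℤ[q]` elsewhere, and so has its difference with
`N̄_w` coefficients in `qℤ[q]` only. The bar involution is unitriangular with respect to the sum
of the positions of the minuses (induct using `N_u = N_{u'} C_s - q N_{u'}`), so the leading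
coefficient `c` of a bar-invariant difference satisfies `c(q) = c(q⁻¹)`, which forces `c = 0`.
-/

open scoped symmDiff

variable {n : ℕ}

lemma _root_.Finset.pair_symmDiff_pair_symmDiff_pair {α : Type*} [DecidableEq α] {a b p k : α}
    (hab : a ≠ b) (hpk : p ≠ k) (hpa : p ≠ a) (hpb : p ≠ b) (hka : k ≠ a) (hkb : k ≠ b) :
    ({a, p} ∆ {b, k} ∆ {a, b} : Finset α) = {p, k} := by
  ext x
  simp only [Finset.mem_symmDiff, Finset.mem_insert, Finset.mem_singleton]
  grind

lemma _root_.Finset.even_card_symmDiff_iff {α : Type*} [DecidableEq α] (s t : Finset α) :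
    Even (s ∆ t).card ↔ (Even s.card ↔ Even t.card) := by
  have hsub : s ∩ t ⊆ s ∪ t := Finset.inter_subset_left.trans Finset.subset_union_left
  have hcard : (s ∆ t).card + 2 * (s ∩ t).card = s.card + t.card := by
    rw [symmDiff_eq_sup_sdiff_inf, Finset.sup_eq_union, Finset.inf_eq_inter,
      Finset.card_sdiff_of_subset hsub, ← Finset.card_union_add_card_inter]
    have := Finset.card_le_card hsub
    omega
  rw [← Nat.even_add, ← hcard]
  simp [Nat.even_add, parity_simps]

lemma _root_.Finset.mem_or_mem_of_not_disjoint_pair {α : Type*} [DecidableEq α] {s : Finset α}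
    {x y : α} (h : ¬ Disjoint s {x, y}) : x ∈ s ∨ y ∈ s := by
  simpa [Finset.disjoint_insert_right, or_iff_not_imp_left] using h

def flipOn (s : Finset (Fin n)) (v : Seq n) : Seq n :=
  fun p => if p ∈ s then !v p else v p

lemma flipOn_apply_of_mem {s : Finset (Fin n)} {p : Fin n} (v : Seq n) (hp : p ∈ s) :
    flipOn s v p = !v p :=
  if_pos hp

lemma flipOn_apply_of_notMem {s : Finset (Fin n)} {p : Fin n} (v : Seq n) (hp : p ∉ s) :
    flipOn s v p = v p :=
  if_neg hp

lemma flipOn_flipOn (s t : Finset (Fin n)) (v : Seq n) :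
    flipOn s (flipOn t v) = flipOn (s ∆ t) v := by
  funext p
  by_cases hs : p ∈ s <;> by_cases ht : p ∈ t <;> simp [flipOn, Finset.mem_symmDiff, hs, ht]

lemma flipOn_flipOn_self (s : Finset (Fin n)) (v : Seq n) : flipOn s (flipOn s v) = v := by
  funext p; by_cases hs : p ∈ s <;> simp [flipOn, hs]

lemma flipOn_comm (s t : Finset (Fin n)) (v : Seq n) :
    flipOn s (flipOn t v) = flipOn t (flipOn s v) := by
  rw [flipOn_flipOn, flipOn_flipOn, symmDiff_comm]

def minusSet (v : Seq n) : Finset (Fin n) := Finset.univ.filter (v · = true)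

lemma evenMinus_iff (v : Seq n) : EvenMinus v ↔ Even (minusSet v).card := by
  rw [EvenMinus, minusSet, ← Set.ncard_coe_finset, Finset.coe_filter]
  simp

lemma minusSet_flipOn (s : Finset (Fin n)) (v : Seq n) :
    minusSet (flipOn s v) = minusSet v ∆ s := by
  ext p; by_cases hs : p ∈ s <;> simp [minusSet, flipOn, Finset.mem_symmDiff, hs]

lemma evenMinus_flipOn_pair {a b : Fin n} (hab : a ≠ b) (v : Seq n) :
    EvenMinus (flipOn {a, b} v) ↔ EvenMinus v := by
  rw [evenMinus_iff, evenMinus_iff, minusSet_flipOn, Finset.even_card_symmDiff_iff,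
    Finset.card_pair hab]
  simp

/-! ### Cups and moves -/

structure Cup (n : ℕ) where
  left : Fin n
  right : Fin n

def Cup.ends (c : Cup n) : Finset (Fin n) := {c.left, c.right}

lemma Cup.left_mem_ends (c : Cup n) : c.left ∈ c.ends := Finset.mem_insert_self _ _

lemma Cup.right_mem_ends (c : Cup n) : c.right ∈ c.ends :=
  Finset.mem_insert_of_mem (Finset.mem_singleton_self _)

def Cup.sorted (p k : Fin n) : Cup n := ⟨min p k, max p k⟩

lemma Cup.sorted_right (p k : Fin n) : (Cup.sorted p k).right = max p k := rfl

lemma Cup.sorted_left_lt_right {p k : Fin n} (h : p ≠ k) :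
    (Cup.sorted p k).left < (Cup.sorted p k).right :=
  min_lt_max.mpr h

lemma Cup.ends_sorted (p k : Fin n) : (Cup.sorted p k).ends = {p, k} := by
  rcases le_total p k with h | h <;> simp [Cup.sorted, Cup.ends, h, Finset.pair_comm]

def moveCup (j : Fin n) : Cup n :=
  if j.val = 0 then ⟨⟨0, j.pos⟩, idx1 j⟩ else ⟨⟨j.val - 1, by omega⟩, j⟩

lemma upMove_iff (j : Fin n) (v : Seq n) :
    upMove j v ↔ v (moveCup j).left = decide (j.val ≠ 0) ∧ v (moveCup j).right = false := by
  unfold upMove moveCup; split_ifs <;> simp_all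

lemma downMove_iff (j : Fin n) (v : Seq n) :
    downMove j v ↔ v (moveCup j).left = decide (j.val = 0) ∧ v (moveCup j).right = true := by
  unfold downMove moveCup; split_ifs <;> simp_all

lemma moveCup_left_lt_right (hn : 2 ≤ n) (j : Fin n) : (moveCup j).left < (moveCup j).right := by
  unfold moveCup idx1
  split_ifs <;> simp [Fin.lt_def, Nat.mod_eq_of_lt (show 1 < n by omega)]; omega

lemma sAct_eq_flipOn (hn : 2 ≤ n) {j : Fin n} {v : Seq n} (h : upMove j v ∨ downMove j v) :
    sAct j v = flipOn (moveCup j).ends v := by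
  have hmod : 1 % n = 1 := Nat.mod_eq_of_lt (by omega)
  funext ⟨k, hk⟩
  unfold upMove downMove at h
  unfold sAct flipOn Cup.ends moveCup
  obtain ⟨j, hj⟩ := j
  by_cases hj0 : j = 0
  · subst hj0
    simp only [if_true, idx1, hmod] at h ⊢
    have hv : v ⟨0, hj⟩ = v ⟨1, by omega⟩ := by
      rcases h with ⟨h1, h2⟩ | ⟨h1, h2⟩ <;> rw [h1, h2]
    simp only [Finset.mem_insert, Finset.mem_singleton, Fin.ext_iff]
    split_ifs <;> subst_vars <;> simp_all
  · simp only [hj0, if_false] at h ⊢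
    have hv : v ⟨j - 1, by omega⟩ = !v ⟨j, hj⟩ := by
      rcases h with ⟨h1, h2⟩ | ⟨h1, h2⟩ <;> rw [h1, h2] <;> rfl
    simp only [Finset.mem_insert, Finset.mem_singleton, Fin.ext_iff]
    split_ifs <;> first | omega | (subst_vars; simp_all)

lemma moveCup_left_ne_right (hn : 2 ≤ n) (j : Fin n) : (moveCup j).left ≠ (moveCup j).right :=
  (moveCup_left_lt_right hn j).ne

lemma evenMinus_flipOn_moveCup (hn : 2 ≤ n) (j : Fin n) (v : Seq n) :
    EvenMinus (flipOn (moveCup j).ends v) ↔ EvenMinus v :=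
  evenMinus_flipOn_pair (moveCup_left_ne_right hn j) v

lemma upMove_flipOn_of_downMove {j : Fin n} {v : Seq n} (hd : downMove j v) :
    upMove j (flipOn (moveCup j).ends v) := by
  rw [downMove_iff] at hd
  rw [upMove_iff, flipOn_apply_of_mem _ (moveCup j).left_mem_ends,
    flipOn_apply_of_mem _ (moveCup j).right_mem_ends, hd.1, hd.2]
  simp

lemma upMove_flipOn_of_disjoint {j : Fin n} {s : Finset (Fin n)}
    (hs : Disjoint s (moveCup j).ends) {v : Seq n} (hu : upMove j v) : upMove j (flipOn s v) := by
  rw [upMove_iff] at hu ⊢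
  rwa [flipOn_apply_of_notMem _ (Finset.disjoint_right.mp hs (moveCup j).left_mem_ends),
    flipOn_apply_of_notMem _ (Finset.disjoint_right.mp hs (moveCup j).right_mem_ends)]

def minusPosSum (v : Seq n) : ℕ := ∑ i ∈ minusSet v, i.val

lemma minusPosSum_flipOn_of_upMove (hn : 2 ≤ n) {j : Fin n} {v : Seq n} (hu : upMove j v) :
    minusPosSum (flipOn (moveCup j).ends v) = minusPosSum v + 1 := by
  have hsplit : ∀ w : Seq n, minusPosSum w =
      (if w (moveCup j).left then (moveCup j).left.val else 0)
      + (if w (moveCup j).right then (moveCup j).right.val else 0)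
      + ∑ i ∈ Finset.univ \ (moveCup j).ends, if w i then i.val else 0 := by
    intro w
    rw [minusPosSum, minusSet, Finset.sum_filter, ← Finset.sum_sdiff (Finset.subset_univ _),
      Cup.ends, Finset.sum_pair (moveCup_left_ne_right hn j)]
    ring
  rw [hsplit, hsplit v, Finset.sum_congr rfl fun i hi =>
      by rw [flipOn_apply_of_notMem v (Finset.mem_sdiff.mp hi).2],
    flipOn_apply_of_mem _ (moveCup j).left_mem_ends,
    flipOn_apply_of_mem _ (moveCup j).right_mem_ends]
  rw [upMove_iff] at hu
  rw [hu.1, hu.2]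
  have h1 : 1 % n = 1 := Nat.mod_eq_of_lt (by omega)
  unfold moveCup idx1
  split_ifs <;> simp_all <;> omega

lemma minusPosSum_flipOn_of_downMove (hn : 2 ≤ n) {j : Fin n} {v : Seq n} (hd : downMove j v) :
    minusPosSum v = minusPosSum (flipOn (moveCup j).ends v) + 1 := by
  have h := minusPosSum_flipOn_of_upMove hn (upMove_flipOn_of_downMove hd)
  rwa [flipOn_flipOn_self] at h

lemma minusPosSum_sAct_le (hn : 2 ≤ n) {j : Fin n} {v : Seq n}
    (h : upMove j v ∨ downMove j v) : minusPosSum (sAct j v) ≤ minusPosSum v + 1 := by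
  rw [sAct_eq_flipOn hn h]
  rcases h with hu | hd
  · rw [minusPosSum_flipOn_of_upMove hn hu]
  · have := minusPosSum_flipOn_of_downMove hn hd
    omega

-- Without a down move every minus is preceded by a minus, so the minuses form an initial
-- segment; two of them would give a down move at `0`, and parity excludes a single one.
lemma exists_downMove (hn : 2 ≤ n) {v : Seq n} (hv : EvenMinus v) (hne : v ≠ fun _ => false) :
    ∃ j, downMove j v := by
  by_contra! hnd
  have h1 : 1 % n = 1 := Nat.mod_eq_of_lt (by omega)
  have hprev : ∀ i (hi : i + 1 < n), v ⟨i + 1, hi⟩ = true → v ⟨i, by omega⟩ = true := by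
    intro i hi h
    have := hnd ⟨i + 1, hi⟩
    simp_all [downMove]
  have hone : ∀ i (hi : i + 1 < n), v ⟨i + 1, hi⟩ = true → v ⟨1, by omega⟩ = true := by
    intro i
    induction i with
    | zero => exact fun _ h => h
    | succ i ih => exact fun hi h => ih (by omega) (hprev _ _ h)
  have hsub : minusSet v ⊆ {⟨0, by omega⟩} := by
    intro ⟨i, hi⟩ hmem
    simp only [minusSet, Finset.mem_filter, Finset.mem_univ, true_and] at hmem
    obtain _ | i := i
    · exact Finset.mem_singleton_self _
    · have h1' := hone i hi hmem
      have h0 := hnd ⟨0, by omega⟩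
      simp only [downMove, if_true, not_and, idx1, h1] at h0
      exact absurd (h0 (hprev 0 _ h1')) (by simp [h1'])
  have hempty : minusSet v = ∅ := by
    have hle := Finset.card_le_card hsub
    have heven := (evenMinus_iff v).mp hv
    rw [Finset.card_singleton] at hle
    rw [← Finset.card_eq_zero]
    rcases heven with ⟨m, hm⟩
    omega
  apply hne
  funext i
  simp only [minusSet, Finset.filter_eq_empty_iff, Finset.mem_univ, true_implies,
    Bool.not_eq_true] at hempty
  exact hempty (x := i)

/-! ### The action of `C_s` on the standard basis -/

lemma q_mul_qinv : q * qinv = 1 := by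
  rw [q, qinv, ← T_add]; rfl

lemma invert_q : invert q = qinv := invert_T 1

lemma coeff_q_mul (c : L) (k : ℤ) : (q * c).coeff k = c.coeff (k - 1) := by
  rw [q, T, AddMonoidAlgebra.coeff_single_mul_apply, one_mul, neg_add_eq_sub]

lemma Cact_zero (j : Fin n) : Cact j (0 : NMod n) = 0 := Finsupp.sum_zero_index

lemma Cact_single_one (j : Fin n) (w : Wp n) :
    Cact j (Finsupp.single w 1) =
      if upMove j w.1 then
        (if he : EvenMinus (sAct j w.1) then
          Finsupp.single (⟨sAct j w.1, he⟩ : Wp n) 1 + Finsupp.single w q else 0)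
      else if downMove j w.1 then
        (if he : EvenMinus (sAct j w.1) then
          Finsupp.single (⟨sAct j w.1, he⟩ : Wp n) 1 + Finsupp.single w qinv else 0)
      else 0 := by
  unfold Cact
  rw [Finsupp.sum_single_index (by split_ifs <;> simp)]
  split_ifs <;> simp

lemma Cact_add (j : Fin n) (x y : NMod n) : Cact j (x + y) = Cact j x + Cact j y :=
  Finsupp.sum_add_index' (fun _ => by split_ifs <;> simp)
    (fun _ _ _ => by split_ifs <;> simp only [add_smul, add_zero])

lemma Cact_sub (j : Fin n) (x y : NMod n) : Cact j (x - y) = Cact j x - Cact j y := by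
  rw [eq_sub_iff_add_eq, ← Cact_add, sub_add_cancel]

lemma Cact_smul (j : Fin n) (r : L) (x : NMod n) : Cact j (r • x) = r • Cact j x := by
  unfold Cact
  rw [Finsupp.sum_smul_index (fun _ => by split_ifs <;> simp), Finsupp.smul_sum]
  refine Finsupp.sum_congr fun _ _ => ?_
  split_ifs <;> simp [mul_smul]

-- `N_v`, taken to be `0` when `v` has an odd number of minuses
noncomputable def stdVec (v : Seq n) : NMod n :=
  if h : EvenMinus v then Finsupp.single ⟨v, h⟩ 1 else 0

lemma stdVec_eq_single (w : Wp n) : stdVec w.1 = Finsupp.single w 1 := dif_pos w.2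

lemma Cact_stdVec_of_upMove (hn : 2 ≤ n) {j : Fin n} {v : Seq n} (hu : upMove j v) :
    Cact j (stdVec v) = stdVec (flipOn (moveCup j).ends v) + q • stdVec v := by
  have hs := sAct_eq_flipOn hn (Or.inl hu)
  have heven := evenMinus_flipOn_moveCup hn j v
  unfold stdVec
  by_cases h : EvenMinus v
  · have h' : EvenMinus (sAct j v) := hs ▸ heven.mpr h
    rw [dif_pos h, dif_pos (heven.mpr h), Cact_single_one, if_pos hu, dif_pos h',
      Finsupp.smul_single, smul_eq_mul, mul_one]
    simp only [hs]
  · rw [dif_neg h, dif_neg (mt heven.mp h), Cact_zero, smul_zero, add_zero]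

lemma Cact_stdVec_of_downMove (hn : 2 ≤ n) {j : Fin n} {v : Seq n} (hd : downMove j v) :
    Cact j (stdVec v) = stdVec (flipOn (moveCup j).ends v) + qinv • stdVec v := by
  have hs := sAct_eq_flipOn hn (Or.inr hd)
  have heven := evenMinus_flipOn_moveCup hn j v
  have hnu : ¬ upMove j v := by
    rw [upMove_iff]; rw [downMove_iff] at hd; rw [hd.1, hd.2]; simp
  unfold stdVec
  by_cases h : EvenMinus v
  · have h' : EvenMinus (sAct j v) := hs ▸ heven.mpr h
    rw [dif_pos h, dif_pos (heven.mpr h), Cact_single_one, if_neg hnu, if_pos hd, dif_pos h',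
      Finsupp.smul_single, smul_eq_mul, mul_one]
    simp only [hs]
  · rw [dif_neg h, dif_neg (mt heven.mp h), Cact_zero, smul_zero, add_zero]

lemma Cact_stdVec_eq_zero {j : Fin n} {v : Seq n} (hu : ¬ upMove j v) (hd : ¬ downMove j v) :
    Cact j (stdVec v) = 0 := by
  unfold stdVec
  split_ifs
  · rw [Cact_single_one, if_neg hu, if_neg hd]
  · exact Cact_zero j

/-! ### Cup sums -/

-- `cupSum v P = ∑_{S ⊆ P} q^{|S|} N_{v_S}`, where `v_S` is `v` with the signs at the ends of the
-- cups of `S` reversed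
noncomputable def cupSum (v : Seq n) : List (Cup n) → NMod n
  | [] => stdVec v
  | c :: P => cupSum v P + q • cupSum (flipOn c.ends v) P

lemma cupSum_nil (v : Seq n) : cupSum v [] = stdVec v := rfl

lemma cupSum_cons (v : Seq n) (c : Cup n) (P : List (Cup n)) :
    cupSum v (c :: P) = cupSum v P + q • cupSum (flipOn c.ends v) P := rfl

lemma cupSum_perm (v : Seq n) {P P' : List (Cup n)} (h : P.Perm P') :
    cupSum v P = cupSum v P' := by
  induction h generalizing v with
  | nil => rfl
  | cons c _ ih => rw [cupSum_cons, cupSum_cons, ih, ih]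
  | swap c d P =>
    simp only [cupSum_cons, smul_add, flipOn_comm c.ends d.ends]
    abel
  | trans _ _ ih₁ ih₂ => rw [ih₁, ih₂]

section Move

variable {j : Fin n} {γ : Seq n}

lemma Cact_stdVec_flipOn_of_xor (hu : upMove j γ) {s : Finset (Fin n)}
    (hs : Xor ((moveCup j).left ∈ s) ((moveCup j).right ∈ s)) :
    Cact j (stdVec (flipOn s γ)) = 0 := by
  rw [upMove_iff] at hu
  apply Cact_stdVec_eq_zero <;> [rw [upMove_iff]; rw [downMove_iff]] <;>
    rcases hs with ⟨ha, hb⟩ | ⟨hb, ha⟩ <;>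
      simp [flipOn_apply_of_mem, flipOn_apply_of_notMem, ha, hb, hu.1, hu.2]

lemma downMove_flipOn (hu : upMove j γ) {s : Finset (Fin n)} (ha : (moveCup j).left ∈ s)
    (hb : (moveCup j).right ∈ s) : downMove j (flipOn s γ) := by
  rw [upMove_iff] at hu
  rw [downMove_iff, flipOn_apply_of_mem _ ha, flipOn_apply_of_mem _ hb, hu.1, hu.2]
  simp

lemma Cact_cupSum_nil (hn : 2 ≤ n) (hu : upMove j γ) :
    Cact j (cupSum γ []) = cupSum (flipOn (moveCup j).ends γ) [moveCup j] := by
  rw [cupSum_nil, Cact_stdVec_of_upMove hn hu, cupSum_cons, cupSum_nil, cupSum_nil,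
    flipOn_flipOn_self]

lemma Cact_cupSum_single (hn : 2 ≤ n) (hu : upMove j γ) {c : Cup n}
    (hc : Xor ((moveCup j).left ∈ c.ends) ((moveCup j).right ∈ c.ends)) :
    Cact j (cupSum γ [c]) = cupSum (flipOn (moveCup j).ends γ) [moveCup j] := by
  rw [cupSum_cons, Cact_add, Cact_smul, Cact_cupSum_nil hn hu, cupSum_nil,
    Cact_stdVec_flipOn_of_xor hu hc, smul_zero, add_zero]

lemma Cact_cupSum_pair (hn : 2 ≤ n) (hu : upMove j γ) {c d e : Cup n}
    (hac : (moveCup j).left ∈ c.ends) (hbc : (moveCup j).right ∉ c.ends)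
    (hbd : (moveCup j).right ∈ d.ends) (had : (moveCup j).left ∉ d.ends)
    (he : e.ends = c.ends ∆ d.ends ∆ (moveCup j).ends) :
    Cact j (cupSum γ [c, d]) = cupSum (flipOn (moveCup j).ends γ) [moveCup j, e] := by
  have hdown : downMove j (flipOn d.ends (flipOn c.ends γ)) := by
    rw [flipOn_flipOn]
    exact downMove_flipOn hu (by simp [Finset.mem_symmDiff, hac, had])
      (by simp [Finset.mem_symmDiff, hbc, hbd])
  simp only [cupSum_cons, cupSum_nil, Cact_add, Cact_smul]
  rw [Cact_stdVec_of_upMove hn hu, Cact_stdVec_flipOn_of_xor hu (.inr ⟨hbd, had⟩),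
    Cact_stdVec_flipOn_of_xor hu (.inl ⟨hac, hbc⟩), Cact_stdVec_of_downMove hn hdown,
    flipOn_flipOn_self]
  simp only [flipOn_flipOn, he, symmDiff_symmDiff_cancel_right, smul_zero, add_zero, smul_add,
    smul_smul, q_mul_qinv, mul_one, zero_add]
  rw [symmDiff_comm d.ends, symmDiff_comm (moveCup j).ends]
  abel

lemma Cact_cupSum_append {T T' : List (Cup n)}
    (hlocal : ∀ γ, upMove j γ → Cact j (cupSum γ T) = cupSum (flipOn (moveCup j).ends γ) T')
    (R : List (Cup n)) (hR : ∀ e ∈ R, Disjoint e.ends (moveCup j).ends) (hu : upMove j γ) :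
    Cact j (cupSum γ (R ++ T)) = cupSum (flipOn (moveCup j).ends γ) (R ++ T') := by
  induction R generalizing γ with
  | nil => exact hlocal γ hu
  | cons e R ih =>
    have hR' : ∀ e ∈ R, Disjoint e.ends (moveCup j).ends := fun e he => hR e (.tail _ he)
    rw [List.cons_append, List.cons_append, cupSum_cons, cupSum_cons, Cact_add, Cact_smul,
      ih hR' hu, ih hR' (upMove_flipOn_of_disjoint (hR e (.head _)) hu), flipOn_comm]

end Move

-- The minus at the right end of every cup rules out a cup on the two positions of an up move.
structure IsCupSystem (α : Seq n) (P : List (Cup n)) : Prop where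
  left_lt_right : ∀ c ∈ P, c.left < c.right
  right_minus : ∀ c ∈ P, α c.right = true
  pairwise_disjoint : P.Pairwise fun c d => Disjoint c.ends d.ends

lemma isCupSystem_nil (α : Seq n) : IsCupSystem α [] :=
  ⟨by simp, by simp, List.Pairwise.nil⟩

lemma isCupSystem_cons_iff {α : Seq n} {c : Cup n} {P : List (Cup n)} :
    IsCupSystem α (c :: P) ↔ c.left < c.right ∧ α c.right = true ∧
      (∀ d ∈ P, Disjoint c.ends d.ends) ∧ IsCupSystem α P := by
  constructor
  · rintro ⟨hlt, hmin, hpw⟩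
    rw [List.pairwise_cons] at hpw
    exact ⟨hlt c (.head _), hmin c (.head _), hpw.1,
      ⟨fun d hd => hlt d (.tail _ hd), fun d hd => hmin d (.tail _ hd), hpw.2⟩⟩
  · rintro ⟨hlt, hmin, hdisj, hP⟩
    refine ⟨?_, ?_, List.pairwise_cons.mpr ⟨hdisj, hP.pairwise_disjoint⟩⟩ <;>
      simp only [List.mem_cons, forall_eq_or_imp]
    exacts [⟨hlt, hP.left_lt_right⟩, ⟨hmin, hP.right_minus⟩]

namespace IsCupSystem

variable {α : Seq n} {P : List (Cup n)}

lemma eq_of_mem_ends (hV : IsCupSystem α P) {c d : Cup n} (hc : c ∈ P) (hd : d ∈ P) {x : Fin n}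
    (hxc : x ∈ c.ends) (hxd : x ∈ d.ends) : c = d := by
  have : Std.Symm fun c d : Cup n => Disjoint c.ends d.ends := ⟨fun _ _ h => h.symm⟩
  by_contra hcd
  exact Finset.disjoint_left.mp (hV.pairwise_disjoint.forall hc hd hcd) hxc hxd

lemma nodup (hV : IsCupSystem α P) : P.Nodup :=
  hV.pairwise_disjoint.imp fun {c d} h (hcd : c = d) =>
    Finset.disjoint_left.mp h c.left_mem_ends (hcd ▸ c.left_mem_ends)

lemma perm (hV : IsCupSystem α P) {P' : List (Cup n)} (h : P.Perm P') : IsCupSystem α P' :=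
  ⟨fun c hc => hV.left_lt_right c (h.mem_iff.mpr hc),
    fun c hc => hV.right_minus c (h.mem_iff.mpr hc),
    (h.pairwise_iff fun h => h.symm).mp hV.pairwise_disjoint⟩

variable {j : Fin n}

lemma right_notMem_ends_of_left_mem (hn : 2 ≤ n) (hV : IsCupSystem α P) (hu : upMove j α)
    {c : Cup n} (hc : c ∈ P) (ha : (moveCup j).left ∈ c.ends) :
    (moveCup j).right ∉ c.ends := by
  intro hb
  have hab := moveCup_left_lt_right hn j
  have hlt := hV.left_lt_right c hc
  have hmin := hV.right_minus c hc
  rw [upMove_iff] at hu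
  simp only [Cup.ends, Finset.mem_insert, Finset.mem_singleton] at ha hb
  rcases ha with ha | ha <;> rcases hb with hb | hb
  all_goals first
    | exact hab.ne (ha.trans hb.symm)
    | (rw [← hb, hu.2] at hmin; exact Bool.false_ne_true hmin)
    | (rw [ha, hb] at hab; exact lt_asymm hab hlt)

lemma left_eq_of_right_mem_ends (hV : IsCupSystem α P) (hu : upMove j α) {d : Cup n}
    (hd : d ∈ P) (hb : (moveCup j).right ∈ d.ends) : d.left = (moveCup j).right := by
  rw [upMove_iff] at hu
  simp only [Cup.ends, Finset.mem_insert, Finset.mem_singleton] at hb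
  refine (hb.resolve_right fun h => ?_).symm
  have := hV.right_minus d hd
  rw [← h, hu.2] at this
  exact Bool.false_ne_true this

lemma exists_Cact_cupSum_of_replace (hV : IsCupSystem α P) (hu : upMove j α)
    {T T' : List (Cup n)} (hT : T.Nodup) (hTP : T ⊆ P)
    (hcover : ∀ c ∈ P, ¬ Disjoint c.ends (moveCup j).ends → c ∈ T)
    (hT' : IsCupSystem (flipOn (moveCup j).ends α) T')
    (hT'ends : ∀ e ∈ T', ∀ x ∈ e.ends, x ∈ (moveCup j).ends ∨ ∃ c ∈ T, x ∈ c.ends)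
    (hlocal : ∀ γ, upMove j γ →
      Cact j (cupSum γ T) = cupSum (flipOn (moveCup j).ends γ) T') :
    ∃ P', IsCupSystem (flipOn (moveCup j).ends α) P' ∧
      Cact j (cupSum α P) = cupSum (flipOn (moveCup j).ends α) P' := by
  obtain ⟨T₀, hT₀, hsub⟩ := List.subperm_of_subset hT hTP
  obtain ⟨R, hR⟩ := hsub.exists_perm_append
  have hP : P.Perm (R ++ T) := hR.trans (List.perm_append_comm.trans (hT₀.append_left R))
  have hRT := hV.perm hP
  have hRP : ∀ e ∈ R, e ∈ P := fun e he => hP.mem_iff.mpr (List.mem_append_left _ he)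
  have hRab : ∀ e ∈ R, Disjoint e.ends (moveCup j).ends := fun e he => by
    by_contra h
    exact List.disjoint_of_nodup_append hRT.nodup he (hcover e (hRP e he) h)
  have hRT_disj := (List.pairwise_append.mp hRT.pairwise_disjoint).2.2
  refine ⟨R ++ T', ⟨?_, ?_, ?_⟩, ?_⟩
  · simp only [List.mem_append]
    rintro e (he | he)
    exacts [hV.left_lt_right e (hRP e he), hT'.left_lt_right e he]
  · simp only [List.mem_append]
    rintro e (he | he)
    · rw [flipOn_apply_of_notMem _ (Finset.disjoint_left.mp (hRab e he) e.right_mem_ends)]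
      exact hV.right_minus e (hRP e he)
    · exact hT'.right_minus e he
  · refine List.pairwise_append.mpr ⟨(List.pairwise_append.mp hRT.pairwise_disjoint).1,
      hT'.pairwise_disjoint, fun e he e' he' => Finset.disjoint_left.mpr fun x hx hx' => ?_⟩
    rcases hT'ends e' he' x hx' with hab | ⟨c, hc, hxc⟩
    exacts [Finset.disjoint_left.mp (hRab e he) hx hab,
      Finset.disjoint_left.mp (hRT_disj e he c hc) hx hxc]
  · rw [cupSum_perm α hP, Cact_cupSum_append hlocal R hRab hu]

lemma isCupSystem_moveCup (hn : 2 ≤ n) (hu : upMove j α) :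
    IsCupSystem (flipOn (moveCup j).ends α) [moveCup j] := by
  rw [upMove_iff] at hu
  refine isCupSystem_cons_iff.mpr ⟨moveCup_left_lt_right hn j, ?_, by simp, isCupSystem_nil _⟩
  rw [flipOn_apply_of_mem _ (moveCup j).right_mem_ends, hu.2, Bool.not_false]

lemma exists_other_end (hV : IsCupSystem α P) {c : Cup n} (hc : c ∈ P) {x : Fin n}
    (hx : x ∈ c.ends) : ∃ p, c.ends = {x, p} ∧ p ≠ x ∧ (α p = true ∨ p < x) := by
  have hlt := hV.left_lt_right c hc
  rcases Finset.mem_insert.mp hx with h | h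
  · exact ⟨c.right, by rw [Cup.ends, h], h ▸ hlt.ne', .inl (hV.right_minus c hc)⟩
  · rw [Finset.mem_singleton] at h
    exact ⟨c.left, by rw [Cup.ends, h, Finset.pair_comm], h ▸ hlt.ne, .inr (h ▸ hlt)⟩

lemma isCupSystem_moveCup_cons (hn : 2 ≤ n) (hu : upMove j α) {e : Cup n}
    (hlt : e.left < e.right) (hmin : α e.right = true) (he : Disjoint (moveCup j).ends e.ends) :
    IsCupSystem (flipOn (moveCup j).ends α) [moveCup j, e] := by
  obtain ⟨hab, hβb, -, -⟩ := isCupSystem_cons_iff.mp (isCupSystem_moveCup hn hu)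
  refine isCupSystem_cons_iff.mpr ⟨hab, hβb, by simpa using he,
    isCupSystem_cons_iff.mpr ⟨hlt, ?_, by simp, isCupSystem_nil _⟩⟩
  rwa [flipOn_apply_of_notMem _ (Finset.disjoint_right.mp he e.right_mem_ends)]

lemma exists_Cact_cupSum_of_two (hn : 2 ≤ n) (hV : IsCupSystem α P) (hu : upMove j α)
    {c d : Cup n} (hc : c ∈ P) (hd : d ∈ P)
    (hac : (moveCup j).left ∈ c.ends) (hbd : (moveCup j).right ∈ d.ends) :
    ∃ P', IsCupSystem (flipOn (moveCup j).ends α) P' ∧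
      Cact j (cupSum α P) = cupSum (flipOn (moveCup j).ends α) P' := by
  set a := (moveCup j).left
  set b := (moveCup j).right
  have hab : a < b := moveCup_left_lt_right hn j
  have hbc : b ∉ c.ends := hV.right_notMem_ends_of_left_mem hn hu hc hac
  have hcd : c ≠ d := by rintro rfl; exact hbc hbd
  have had : a ∉ d.ends := fun had => hcd (hV.eq_of_mem_ends hc hd hac had)
  obtain ⟨p, hcends, hpa, hp⟩ := hV.exists_other_end hc hac
  have hdb : d.left = b := hV.left_eq_of_right_mem_ends hu hd hbd
  set k := d.right
  have hbk : b < k := hdb ▸ hV.left_lt_right d hd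
  have hpc : p ∈ c.ends := by simp [hcends]
  have hpb : p ≠ b := fun h => hbc (h ▸ hpc)
  have hka : k ≠ a := fun h => had (h ▸ d.right_mem_ends)
  have hpk : p ≠ k := fun h => hcd (hV.eq_of_mem_ends hc hd hpc (h ▸ d.right_mem_ends))
  set e := Cup.sorted p k
  have hmax : α e.right = true := by
    rcases le_total p k with h | h
    · rw [Cup.sorted_right, max_eq_right h]; exact hV.right_minus d hd
    · rw [Cup.sorted_right, max_eq_left h]
      exact hp.resolve_right fun hpa' => (hpa'.trans (hab.trans hbk)).not_ge h
  have hab_e : Disjoint (moveCup j).ends e.ends := by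
    rw [Cup.ends_sorted]
    show Disjoint {a, b} {p, k}
    simp [hpa, hpb, hka, hbk.ne']
  refine hV.exists_Cact_cupSum_of_replace (T := [c, d]) (T' := [moveCup j, e]) hu
    (by simpa using hcd) (by simp [hc, hd]) (fun c' hc' h => ?_)
    (isCupSystem_moveCup_cons hn hu (Cup.sorted_left_lt_right hpk) hmax hab_e) ?_
    fun γ hγ => Cact_cupSum_pair hn hγ hac hbc hbd had ?_
  · rcases Finset.mem_or_mem_of_not_disjoint_pair h with h | h
    · simp [hV.eq_of_mem_ends hc' hc h hac]
    · simp [hV.eq_of_mem_ends hc' hd h hbd]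
  · simp only [List.mem_cons, List.not_mem_nil, or_false, forall_eq_or_imp, forall_eq]
    refine ⟨fun x hx => .inl hx, fun x hx => .inr ?_⟩
    rw [Cup.ends_sorted, Finset.mem_insert, Finset.mem_singleton] at hx
    rcases hx with rfl | rfl
    exacts [⟨c, by simp, hpc⟩, ⟨d, by simp, d.right_mem_ends⟩]
  · rw [Cup.ends_sorted, hcends, Cup.ends, hdb]
    exact (Finset.pair_symmDiff_pair_symmDiff_pair hab.ne hpk hpa hpb hka hbk.ne').symm

lemma exists_Cact_cupSum (hn : 2 ≤ n) (hV : IsCupSystem α P) (hu : upMove j α) :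
    ∃ P', IsCupSystem (flipOn (moveCup j).ends α) P' ∧
      Cact j (cupSum α P) = cupSum (flipOn (moveCup j).ends α) P' := by
  have hmem : ∀ c : Cup n, ¬ Disjoint c.ends (moveCup j).ends →
      (moveCup j).left ∈ c.ends ∨ (moveCup j).right ∈ c.ends :=
    fun _ h => Finset.mem_or_mem_of_not_disjoint_pair h
  by_cases h₁ : ∃ c ∈ P, ¬ Disjoint c.ends (moveCup j).ends
  · obtain ⟨c, hc, hcab⟩ := h₁
    by_cases h₂ : ∃ d ∈ P, d ≠ c ∧ ¬ Disjoint d.ends (moveCup j).ends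
    · obtain ⟨d, hd, hdc, hdab⟩ := h₂
      rcases hmem c hcab with hac | hbc
      · refine hV.exists_Cact_cupSum_of_two hn hu hc hd hac ((hmem d hdab).resolve_left ?_)
        exact fun had => hdc (hV.eq_of_mem_ends hd hc had hac)
      · refine hV.exists_Cact_cupSum_of_two hn hu hd hc ((hmem d hdab).resolve_right ?_) hbc
        exact fun hbd => hdc (hV.eq_of_mem_ends hd hc hbd hbc)
    · have hxor : Xor ((moveCup j).left ∈ c.ends) ((moveCup j).right ∈ c.ends) := by
        rcases hmem c hcab with ha | hb
        · exact .inl ⟨ha, hV.right_notMem_ends_of_left_mem hn hu hc ha⟩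
        · exact .inr ⟨hb, fun ha => hV.right_notMem_ends_of_left_mem hn hu hc ha hb⟩
      refine hV.exists_Cact_cupSum_of_replace hu (List.nodup_singleton c) (by simpa using hc)
        (fun d hd hdab => List.mem_singleton.mpr (by_contra fun h => h₂ ⟨d, hd, h, hdab⟩))
        (isCupSystem_moveCup hn hu) (fun e he x hx => .inl ?_)
        (fun γ hγ => Cact_cupSum_single hn hγ hxor)
      rw [List.mem_singleton] at he
      rwa [he] at hx
  · refine hV.exists_Cact_cupSum_of_replace hu List.nodup_nil (List.nil_subset _)
      (fun c hc h => absurd ⟨c, hc, h⟩ h₁) (isCupSystem_moveCup hn hu)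
      (fun e he x hx => .inl ?_)
      (fun γ hγ => Cact_cupSum_nil hn hγ)
    rw [List.mem_singleton] at he
    rwa [he] at hx

end IsCupSystem

lemma exists_foldl_Cact_cupSum (hn : 2 ≤ n) {l : List (Fin n)} {α ω : Seq n}
    (hl : UpChain l α ω) {P : List (Cup n)} (hV : IsCupSystem α P) :
    ∃ P', IsCupSystem ω P' ∧ l.foldl (fun x j => Cact j x) (cupSum α P) = cupSum ω P' := by
  induction l generalizing α P with
  | nil => exact ⟨P, (hl : α = ω) ▸ hV, by rw [(hl : α = ω)]; rfl⟩
  | cons j l ih =>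
    obtain ⟨hu, hl⟩ := hl
    obtain ⟨P₁, hV₁, h₁⟩ := hV.exists_Cact_cupSum hn hu
    rw [← sAct_eq_flipOn hn (.inl hu)] at hV₁ h₁
    obtain ⟨P', hV', h'⟩ := ih hl hV₁
    exact ⟨P', hV', by rw [List.foldl_cons, h₁, h']⟩

/-! ### Coefficients of cup sums -/

lemma cupSum_apply_eq_of_notMem {v : Seq n} {P : List (Cup n)} {w : Wp n}
    (hw : (cupSum v P) w ≠ 0) {x : Fin n} (hx : ∀ c ∈ P, x ∉ c.ends) : w.1 x = v x := by
  induction P generalizing v with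
  | nil =>
    unfold cupSum stdVec at hw
    split_ifs at hw
    · rw [Finsupp.single_apply] at hw
      split_ifs at hw with h
      · rw [← h]
      · exact absurd rfl hw
    · exact absurd rfl hw
  | cons c P ih =>
    have hxP : ∀ d ∈ P, x ∉ d.ends := fun d hd => hx d (.tail _ hd)
    rw [cupSum_cons, Finsupp.add_apply, Finsupp.smul_apply] at hw
    by_cases h : (cupSum v P) w = 0
    · rw [h, zero_add] at hw
      rw [ih (right_ne_zero_of_smul hw) hxP, flipOn_apply_of_notMem _ (hx c (.head _))]
    · exact ih h hxP

lemma coeff_cupSum_apply_of_neg {v : Seq n} {P : List (Cup n)} {w : Wp n} {k : ℤ} (hk : k < 0) :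
    ((cupSum v P) w).coeff k = 0 := by
  induction P generalizing v k with
  | nil =>
    unfold cupSum stdVec
    split_ifs
    · rw [Finsupp.single_apply]
      split_ifs
      · rw [← T_zero, T_apply, if_neg hk.ne']
      · rfl
    · rfl
  | cons c P ih =>
    rw [cupSum_cons, Finsupp.add_apply, Finsupp.smul_apply, smul_eq_mul,
      AddMonoidAlgebra.coeff_add, Finsupp.add_apply, coeff_q_mul, ih hk, ih (by omega), add_zero]

lemma cupSum_apply_self {α : Seq n} (hα : EvenMinus α) {P : List (Cup n)}
    (hP : P.Pairwise fun c d => Disjoint c.ends d.ends) : (cupSum α P) ⟨α, hα⟩ = 1 := by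
  induction P with
  | nil => rw [cupSum_nil, stdVec, dif_pos hα, Finsupp.single_eq_same]
  | cons c P ih =>
    obtain ⟨hc, hP⟩ := List.pairwise_cons.mp hP
    have hzero : (cupSum (flipOn c.ends α) P) ⟨α, hα⟩ = 0 := by
      by_contra h
      have := cupSum_apply_eq_of_notMem h fun d hd => Finset.disjoint_left.mp (hc d hd)
        c.left_mem_ends
      rw [flipOn_apply_of_mem _ c.left_mem_ends] at this
      exact Bool.not_ne_self _ this.symm
    rw [cupSum_cons, Finsupp.add_apply, Finsupp.smul_apply, ih hP, hzero, smul_zero, add_zero]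

lemma coeff_cupSum_apply_of_ne {α : Seq n} (hα : EvenMinus α) {P : List (Cup n)}
    {w : Wp n} (hw : w ≠ ⟨α, hα⟩) {k : ℤ} (hk : k ≤ 0) :
    ((cupSum α P) w).coeff k = 0 := by
  induction P generalizing k with
  | nil =>
    rw [cupSum_nil, stdVec, dif_pos hα, Finsupp.single_apply, if_neg (Ne.symm hw)]
    rfl
  | cons c P ih =>
    rw [cupSum_cons, Finsupp.add_apply, Finsupp.smul_apply, smul_eq_mul,
      AddMonoidAlgebra.coeff_add, Finsupp.add_apply, coeff_q_mul, ih hk,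
      coeff_cupSum_apply_of_neg (by omega), add_zero]

/-! ### Unitriangularity of the bar involution -/

lemma Cact_mem_supported (hn : 2 ≤ n) (j : Fin n) {m : ℕ} {x : NMod n}
    (hx : x ∈ Finsupp.supported L L {v : Wp n | minusPosSum v.1 < m}) :
    Cact j x ∈ Finsupp.supported L L {v : Wp n | minusPosSum v.1 < m + 1} := by
  have hlt : ∀ w ∈ x.support, minusPosSum w.1 < m :=
    fun w hw => (Finsupp.mem_supported _ _).mp hx hw
  refine Submodule.sum_mem _ fun w hw => ?_
  dsimp only
  split_ifs with hu _ hd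
  all_goals first
    | exact zero_mem _
    | refine Submodule.smul_mem _ _ (add_mem (Finsupp.single_mem_supported _ _ ?_)
        (Finsupp.single_mem_supported _ _ (Nat.lt_succ_of_lt (hlt w hw))))
  exacts [(minusPosSum_sAct_le hn (.inl hu)).trans_lt (Nat.succ_lt_succ (hlt w hw)),
    (minusPosSum_sAct_le hn (.inr hd)).trans_lt (Nat.succ_lt_succ (hlt w hw))]

lemma bar_single_sub_mem_supported (hn : 2 ≤ n) (bar : NMod n →+ NMod n)
    (hbar_smul : ∀ (r : L) x, bar (r • x) = invert r • bar x)
    (hbar_e : bar (Finsupp.single (eW n) 1) = Finsupp.single (eW n) 1)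
    (hbar_C : ∀ j x, bar (Cact j x) = Cact j (bar x)) (u : Wp n) :
    bar (Finsupp.single u 1) - Finsupp.single u 1 ∈
      Finsupp.supported L L {v : Wp n | minusPosSum v.1 < minusPosSum u.1} := by
  induction hm : minusPosSum u.1 using Nat.strong_induction_on generalizing u with
  | _ m ih =>
  by_cases hue : u = eW n
  · rw [hue, hbar_e, sub_self]
    exact zero_mem _
  obtain ⟨j, hd⟩ := exists_downMove hn u.2 fun h => hue (Subtype.ext h)
  set u' : Wp n := ⟨flipOn (moveCup j).ends u.1, (evenMinus_flipOn_moveCup hn j u.1).mpr u.2⟩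
  have hℓ : m = minusPosSum u'.1 + 1 := hm ▸ minusPosSum_flipOn_of_downMove hn hd
  have hC : Cact j (Finsupp.single u' 1) = Finsupp.single u 1 + q • Finsupp.single u' 1 := by
    rw [← stdVec_eq_single, Cact_stdVec_of_upMove hn (upMove_flipOn_of_downMove hd),
      flipOn_flipOn_self, stdVec_eq_single u, stdVec_eq_single u']
  set z := bar (Finsupp.single u' 1) - Finsupp.single u' 1
  have hz := ih _ (by omega) u' rfl
  have key : bar (Finsupp.single u 1) - Finsupp.single u 1
      = Cact j z - qinv • z + (q - qinv) • Finsupp.single u' 1 := by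
    rw [eq_sub_of_add_eq hC.symm, map_sub, hbar_C, hbar_smul, invert_q, Cact_sub]
    simp only [z, smul_sub, sub_smul]
    abel
  rw [key, hℓ]
  have hmono : Finsupp.supported L L {v : Wp n | minusPosSum v.1 < minusPosSum u'.1} ≤
      Finsupp.supported L L {v | minusPosSum v.1 < minusPosSum u'.1 + 1} :=
    Finsupp.supported_mono fun v hv => Nat.lt_succ_of_lt hv
  exact add_mem (sub_mem (Cact_mem_supported hn j hz) (Submodule.smul_mem _ _ (hmono hz)))
    (Submodule.smul_mem _ _ (Finsupp.single_mem_supported _ _ (Nat.lt_succ_self _)))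

lemma eq_zero_of_invert_eq_self {c : L} (h : invert c = c) (hc : ∀ k ≤ 0, c.coeff k = 0) :
    c = 0 := by
  ext k
  by_cases hk : k ≤ 0
  · exact hc k hk
  · rw [← h, invert_apply]
    exact hc (-k) (by omega)

lemma eq_zero_of_bar_eq_self {ι : Type*} (ℓ : ι → ℕ)
    (bar : (ι →₀ L) →+ (ι →₀ L))
    (hbar_smul : ∀ (r : L) x, bar (r • x) = invert r • bar x)
    (hbar_tri : ∀ u, bar (Finsupp.single u 1) - Finsupp.single u 1 ∈
      Finsupp.supported L L {v | ℓ v < ℓ u})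
    {y : ι →₀ L} (hy : bar y = y) (hpos : ∀ v, ∀ k ≤ 0, (y v).coeff k = 0) : y = 0 := by
  by_contra hne
  obtain ⟨v, hv, hvmax⟩ :=
    Finset.exists_max_image y.support ℓ (Finsupp.support_nonempty_iff.mpr hne)
  have hsingle : ∀ u ∈ y.support, bar (Finsupp.single u 1) v = Finsupp.single u 1 v := by
    intro u hu
    have h := (Finsupp.mem_supported' _ _).mp (hbar_tri u) v (not_lt.mpr (hvmax u hu))
    rwa [Finsupp.sub_apply, sub_eq_zero] at h
  have hbar_v : bar y v = invert (y v) := by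
    conv_lhs => rw [← Finsupp.sum_single y]
    rw [map_finsuppSum, Finsupp.sum_apply, Finsupp.sum, Finset.sum_eq_single v]
    · rw [← Finsupp.smul_single_one, hbar_smul, Finsupp.smul_apply,
        hsingle v hv, Finsupp.single_eq_same, smul_eq_mul, mul_one]
    · intro u hu huv
      rw [← Finsupp.smul_single_one, hbar_smul, Finsupp.smul_apply,
        hsingle u hu, Finsupp.single_eq_of_ne' huv, smul_zero]
    · exact fun h => absurd hv h
  exact Finsupp.mem_support_iff.mp hv
    (eq_zero_of_invert_eq_self (hbar_v.symm.trans (by rw [hy])) (hpos v))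

lemma bar_foldl_Cact (bar : NMod n → NMod n) (hbar_C : ∀ j x, bar (Cact j x) = Cact j (bar x))
    (l : List (Fin n)) {x : NMod n} (hx : bar x = x) :
    bar (l.foldl (fun x j => Cact j x) x) = l.foldl (fun x j => Cact j x) x := by
  induction l generalizing x with
  | nil => exact hx
  | cons j l ih => exact ih (by rw [hbar_C, hx])

theorem statement_8_general (n : ℕ) (hn : 4 ≤ n)
    (bar : NMod n → NMod n)
    (hbar_add : ∀ x y, bar (x + y) = bar x + bar y)
    (hbar_smul : ∀ (r : L) x, bar (r • x) = (LaurentPolynomial.invert r) • bar x)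
    (hbar_e : bar (Finsupp.single (eW n) 1) = Finsupp.single (eW n) 1)
    (hbar_C : ∀ j x, bar (Cact j x) = Cact j (bar x))
    (Nb : Wp n → NMod n)
    (hNb_bar : ∀ w, bar (Nb w) = Nb w)
    (hNb_diag : ∀ w, (Nb w) w = 1)
    (hNb_tri : ∀ w v, v ≠ w → ∀ k : ℤ, k ≤ 0 → ((Nb w) v).coeff k = 0)
    (w : Wp n) (l : List (Fin n)) (hl : UpChain l (eW n).1 w.1) :
    Nb w = l.foldl (fun x j => Cact j x) (Finsupp.single (eW n) (1 : L)) := by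
  have hn2 : 2 ≤ n := by omega
  obtain ⟨P, hP, hfold⟩ := exists_foldl_Cact_cupSum hn2 hl (isCupSystem_nil (eW n).1)
  rw [cupSum_nil, stdVec_eq_single] at hfold
  have hbar : bar (cupSum w.1 P) = cupSum w.1 P := by
    rw [← hfold, bar_foldl_Cact bar hbar_C l hbar_e]
  have hpos : ∀ v, ∀ k ≤ 0, ((cupSum w.1 P - Nb w) v).coeff k = 0 := by
    intro v k hk
    rw [Finsupp.sub_apply, AddMonoidAlgebra.coeff_sub, Finsupp.sub_apply]
    by_cases hv : v = w
    · subst hv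
      rw [cupSum_apply_self v.2 hP.pairwise_disjoint, hNb_diag, sub_self]
    · rw [coeff_cupSum_apply_of_ne w.2 hv hk, hNb_tri w v hv k hk, sub_self]
  let B : NMod n →+ NMod n := AddMonoidHom.mk' bar hbar_add
  have hdiff := eq_zero_of_bar_eq_self (fun v : Wp n => minusPosSum v.1) B hbar_smul
    (bar_single_sub_mem_supported hn2 B hbar_smul hbar_e hbar_C)
    (by rw [map_sub]; exact congr_arg₂ _ hbar (hNb_bar w)) hpos
  rw [hfold, ← sub_eq_zero.mp hdiff]

/-- Every element `w` of `W^p` (type `D_n` modulo the type `A_{n-1}`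
parabolic) is Deodhar: for any reduced expression `w = s_{i_1} ⋯ s_{i_k}`, the parabolic
Kazhdan–Lusztig basis element satisfies `N̄_w = N̄_e C_{s_{i_1}} ⋯ C_{s_{i_k}}`
(where `C_s = H_s + q`, and `N̄_e = N_e`). -/
theorem statement_8 (n : ℕ) (hn : 4 ≤ n)
    (bar : NMod n → NMod n)
    (hbar_add : ∀ x y, bar (x + y) = bar x + bar y)
    (hbar_smul : ∀ (r : L) x, bar (r • x) = (LaurentPolynomial.invert r) • bar x)
    (hbar_invol : ∀ x, bar (bar x) = x)
    (hbar_e : bar (Finsupp.single (eW n) 1) = Finsupp.single (eW n) 1)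
    (hbar_C : ∀ j x, bar (Cact j x) = Cact j (bar x))
    (Nb : Wp n → NMod n)
    (hNb_bar : ∀ w, bar (Nb w) = Nb w)
    (hNb_diag : ∀ w, (Nb w) w = 1)
    (hNb_tri : ∀ w v, v ≠ w → ∀ k : ℤ, k ≤ 0 → ((Nb w) v).coeff k = 0)
    (hNb_e : Nb (eW n) = Finsupp.single (eW n) 1)
    (w : Wp n) (l : List (Fin n)) (hl : UpChain l (eW n).1 w.1) :
    Nb w = l.foldl (fun x j => Cact j x) (Finsupp.single (eW n) (1 : L)) :=
  statement_8_general n hn bar hbar_add hbar_smul hbar_e hbar_C Nb hNb_bar hNb_diag hNb_tri w l hl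

end TypeD
end

section
/- In a circle diagram formed by gluing a cap diagram on top of a cup diagram (both of type D), any circle that crosses the middle axis either contains both members of every linked pair it meets, or contains exactly one member of every linked pair it meets. -/
namespace TypeD

attribute [local instance] Classical.propDecidable

/-- Two points lie on the same circle of the circle diagram obtained by gluing the cap
diagram (with pairing `gt`) on top of the cup diagram (with pairing `gb`). -/
def CircRel {m : ℕ} (gb gt : Fin m → Fin m) : Fin m → Fin m → Prop :=
  Relation.EqvGen fun x y => gb x = y ∨ gt x = y

/-- The circle through the point `p`, as a set of boundary points. -/
def circleAt {m : ℕ} (gb gt : Fin m → Fin m) (p : Fin m) : Set (Fin m) :=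
  {x | CircRel gb gt p x}

/-- The number of distinct linked (decorated) pairs of the circle diagram met by the
set of points `C` (each pair counted via its first member). -/
noncomputable def nPairs {n : ℕ} {α β : Seq n} (D : CupDiagram n α) (E : CupDiagram n β)
    (C : Set (Fin (4 * n))) : ℕ :=
  {a : Fin (4 * n) | ∃ b, (D.Linked a b ∨ E.Linked a b) ∧ (a ∈ C ∨ b ∈ C)}.ncard

/-- A circle is red if it passes through more than one upper outer point, more than one
lower outer point, or meets an odd number of distinct linked pairs. -/
noncomputable def RedCircle {n : ℕ} {α β : Seq n} (D : CupDiagram n α)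
    (E : CupDiagram n β) (C : Set (Fin (4 * n))) : Prop :=
  1 < {i | i ∈ C ∧ 3 * n ≤ i.val}.ncard ∨
  1 < {i | i ∈ C ∧ i.val < n}.ncard ∨
  Odd (nPairs D E C)

/-- A circle is black if it passes through no outer point and meets an even number of
distinct linked pairs. -/
noncomputable def BlackCircle {n : ℕ} {α β : Seq n} (D : CupDiagram n α)
    (E : CupDiagram n β) (C : Set (Fin (4 * n))) : Prop :=
  (∀ i ∈ C, n ≤ i.val ∧ i.val < 3 * n) ∧ Even (nPairs D E C)

/-- A circle is green if it is neither black nor red. -/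
noncomputable def GreenCircle {n : ℕ} {α β : Seq n} (D : CupDiagram n α)
    (E : CupDiagram n β) (C : Set (Fin (4 * n))) : Prop :=
  ¬ BlackCircle D E C ∧ ¬ RedCircle D E C

/-!
The reflection `Fin.rev` of the `4n` points negates the extended weight, and a labelling
determines its non-crossing matching, so the matching of a cup diagram commutes with the
reflection; in particular every arc crossing the middle is symmetric. Since there is an even
number of such arcs, every one of them belongs to a linked pair, and exchanging endpoints
within a pair of symmetric arcs keeps the diagram symmetric. Hence the reflection maps
circles to circles, and a circle is either reflection-stable or disjoint from its reflection.
A linked pair `a, b` joins `a` to the reflection of `b` (and `b` to that of `a`), so a circle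
through one member contains the reflection of the other: this member lies on the circle as
well exactly when the circle is stable.
-/
section Matching

variable {m : ℕ} {L : Fin m → Bool} {f f' : Fin m → Fin m} {i j : Fin m}

def IsNCFor (L : Fin m → Bool) (f : Fin m → Fin m) : Prop :=
  IsMatching f ∧ ∀ i, i < f i → L i = false ∧ L (f i) = true

theorem IsMatching.lt_or_gt (hf : IsMatching f) (i : Fin m) : i < f i ∨ f i < i :=
  (hf.nofix i).symm.lt_or_gt

theorem IsMatching.injective (hf : IsMatching f) : Function.Injective f :=
  Function.LeftInverse.injective hf.invol

theorem IsMatching.apply_mem_Ioo (hf : IsMatching f) (hi : i < f i) (hij : i < j)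
    (hj : j < f i) : i < f j ∧ f j < f i := by
  rcases hf.lt_or_gt j with hj' | hj'
  · exact ⟨hij.trans hj', hf.noncross i j hi hj' hij hj⟩
  refine ⟨lt_of_not_ge fun hle => ?_, hj'.trans hj⟩
  rcases hle.lt_or_eq with hlt | heq
  · have := hf.noncross (f j) i (by rwa [hf.invol]) hi hlt (by rwa [hf.invol])
    rw [hf.invol] at this
    exact this.not_gt hj
  · rw [← heq, hf.invol] at hj
    exact hj.false

theorem IsNCFor.lt_apply_iff (hf : IsNCFor L f) : i < f i ↔ L i = false := by
  refine ⟨fun h => (hf.2 i h).1, fun hL => (hf.1.lt_or_gt i).resolve_right fun h => ?_⟩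
  have := (hf.2 (f i) (by rwa [hf.1.invol])).2
  rw [hf.1.invol, hL] at this
  exact Bool.false_ne_true this

theorem IsNCFor.exists_shorter_ne (hf : IsNCFor L f) (hf' : IsNCFor L f')
    (hi : i < f' i) (h : f' i < f i) :
    ∃ k, k < f k ∧ f k ≠ f' k ∧ (f k : ℕ) - k < (f' i : ℕ) - i := by
  have hLj : L (f' i) = true := (hf'.2 i hi).2
  have hj : f (f' i) < f' i :=
    (hf.1.lt_or_gt _).resolve_left fun hlt => by simp [hf.lt_apply_iff.mp hlt] at hLj
  have hfi : i < f i := hf.lt_apply_iff.mpr (hf'.lt_apply_iff.mp hi)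
  obtain ⟨hk₁, -⟩ := hf.1.apply_mem_Ioo hfi hi h
  refine ⟨f (f' i), by rwa [hf.1.invol], fun he => ?_, ?_⟩
  · rw [hf.1.invol] at he
    exact hk₁.ne (hf'.1.injective he)
  · rw [hf.1.invol]
    omega

/-- A labelling determines its non-crossing matching: a shortest arc on which two of them
differ would contain a shorter one. -/
theorem IsNCFor.unique (hf : IsNCFor L f) (hf' : IsNCFor L f') : f = f' := by
  have key : ∀ s i, L i = false → min (f i : ℕ) (f' i) - i = s → f i = f' i := by
    intro s
    induction s using Nat.strong_induction_on with
    | _ s ih =>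
      intro i hL hs
      have hi := hf.lt_apply_iff.mpr hL
      have hi' := hf'.lt_apply_iff.mpr hL
      by_contra hne
      rcases lt_or_gt_of_ne hne with hlt | hlt
      · obtain ⟨k, hk, hne', hspan⟩ := hf'.exists_shorter_ne hf hi hlt
        exact hne' (ih _ (by omega) k (hf'.lt_apply_iff.mp hk) rfl).symm
      · obtain ⟨k, hk, hne', hspan⟩ := hf.exists_shorter_ne hf' hi' hlt
        exact hne' (ih _ (by omega) k (hf.lt_apply_iff.mp hk) rfl)
  funext i
  cases hL : L i with
  | false => exact key _ i hL rfl
  | true =>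
    have hfi : f i < f (f i) := by
      rw [hf.1.invol]
      exact (hf.1.lt_or_gt i).resolve_left fun h => by simp [hf.lt_apply_iff.mp h] at hL
    have := key _ (f i) (hf.lt_apply_iff.mp hfi) rfl
    rw [hf.1.invol] at this
    nth_rw 2 [this]
    rw [hf'.1.invol]

end Matching

section Reversal

variable {m : ℕ} {L : Fin m → Bool} {f : Fin m → Fin m}

theorem IsNCFor.conj_rev (hL : ∀ i, L i.rev = !L i) (hf : IsNCFor L f) :
    IsNCFor L fun i => (f i.rev).rev := by
  refine ⟨⟨fun i => by simp [hf.1.invol],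
    fun i h => hf.1.nofix i.rev (by rw [← Fin.rev_rev (f i.rev), h]),
    fun a b ha hb hab hba => ?_⟩, fun i hi => ?_⟩
  · rw [Fin.lt_rev_iff] at ha hb hba
    rw [← Fin.rev_lt_rev] at hab
    rw [Fin.rev_lt_rev]
    exact (hf.1.apply_mem_Ioo (i := f a.rev) (by rwa [hf.1.invol]) hba
      (by rwa [hf.1.invol])).1
  · rw [Fin.lt_rev_iff] at hi
    obtain ⟨hL₁, hL₂⟩ := hf.2 (f i.rev) (by rwa [hf.1.invol])
    rw [hf.1.invol] at hL₂
    refine ⟨?_, by rw [hL, hL₁]; rfl⟩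
    simpa [hL₂] using hL i.rev

theorem IsNCFor.apply_rev (hL : ∀ i, L i.rev = !L i) (hf : IsNCFor L f) (i : Fin m) :
    f i.rev = (f i).rev := by
  simpa using congrFun (hf.unique (hf.conj_rev hL)) i.rev

end Reversal

theorem _root_.Finset.even_card_filter_apply_mem {α : Type*} [DecidableEq α] (s : Finset α)
    {f : α → α} (hinv : Function.Involutive f) (hfix : ∀ x, f x ≠ x) :
    Even (s.filter fun x => f x ∈ s).card := by
  rw [← ZMod.natCast_eq_zero_iff_even, Finset.card_eq_sum_ones, Nat.cast_sum]
  refine Finset.sum_involution (fun x _ => f x) (fun _ _ => by decide)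
    (fun x _ _ => hfix x) (fun x hx => ?_) (fun x _ => hinv x)
  simp only [Finset.mem_filter] at hx ⊢
  exact ⟨hx.2, by rw [hinv x]; exact hx.1⟩

theorem _root_.Set.Finite.exists_ncard_sep_le_eq {α : Type*} [LinearOrder α] {S : Set α}
    (hS : S.Finite) {j : ℕ} (h₁ : 1 ≤ j) (h₂ : j ≤ S.ncard) :
    ∃ b ∈ S, {c ∈ S | b ≤ c}.ncard = j := by
  classical
  have hk : hS.toFinset.card = S.ncard := (Set.ncard_eq_toFinset_card S hS).symm
  set e := hS.toFinset.orderEmbOfFin rfl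
  have hrange : Set.range e = S := by simp [e, Finset.range_orderEmbOfFin]
  have hmem (l) : e l ∈ S := hrange.subset (Set.mem_range_self l)
  let i : Fin hS.toFinset.card := ⟨hS.toFinset.card - j, by omega⟩
  have hsep : {c ∈ S | e i ≤ c} = e '' Set.Ici i := by
    ext c
    constructor
    · rintro ⟨hc, hle⟩
      obtain ⟨l, rfl⟩ : c ∈ Set.range e := by rwa [hrange]
      exact ⟨l, e.le_iff_le.mp hle, rfl⟩
    · rintro ⟨l, hl, rfl⟩
      exact ⟨hmem l, e.le_iff_le.mpr hl⟩
  refine ⟨e i, hmem i, ?_⟩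
  rw [hsep, Set.ncard_image_of_injective _ e.injective, Set.ncard_eq_toFinset_card',
    Set.toFinset_Ici, Fin.card_Ici]
  simp only [i]
  omega

section CupDiagram

variable {n : ℕ} {α : Seq n} {f : Fin (4 * n) → Fin (4 * n)} {a b i : Fin (4 * n)}

theorem extLab_rev (α : Seq n) (i : Fin (4 * n)) : extLab α i.rev = !extLab α i := by
  have hi := i.isLt
  have hrev := Fin.val_rev i
  simp only [extLab]
  split_ifs <;>
    first
      | rfl
      | omega
      | (simp only [Bool.not_not]; exact congrArg α (Fin.ext (by simp only; omega)))
      | exact congrArg (fun b => !α b) (Fin.ext (by simp only; omega))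

theorem IsNC.apply_rev (hf : IsNC α f) (i : Fin (4 * n)) : f i.rev = (f i).rev :=
  IsNCFor.apply_rev (extLab_rev α) hf i

theorem IsNC.cross_rev_iff (hf : IsNC α f) : Cross f i.rev ↔ Cross f (f i) := by
  have := i.isLt
  simp only [Cross, hf.apply_rev, Fin.val_rev, hf.1.invol]
  omega

/-- The arcs `(a, f a)` and `(rev (f a), rev a)` both contain the middle, so by
non-crossing they cannot be nested unless they coincide. -/
theorem IsNC.apply_eq_rev_of_cross (hf : IsNC α f) (ha : Cross f a) : f a = a.rev := by
  obtain ⟨ha₁, ha₂⟩ := ha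
  have hb := (f a).isLt
  have hfb : f (f a).rev = a.rev := by rw [hf.apply_rev, hf.1.invol]
  rcases lt_trichotomy a (f a).rev with hlt | heq | hgt
  · have := (hf.1.apply_mem_Ioo (j := (f a).rev) (Fin.lt_def.mpr (by omega)) hlt
      (Fin.lt_def.mpr (by simp only [Fin.val_rev]; omega))).2
    rw [hfb, Fin.lt_def] at this
    rw [Fin.lt_def] at hlt
    simp only [Fin.val_rev] at this hlt
    omega
  · rw [← Fin.rev_rev (f a), ← heq]
  · have := (hf.1.apply_mem_Ioo (i := (f a).rev) (j := a)
      (by rw [hfb, Fin.lt_def]; simp only [Fin.val_rev]; omega) hgt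
      (by rw [hfb, Fin.lt_def]; simp only [Fin.val_rev]; omega)).2
    rw [hfb, Fin.lt_def] at this
    rw [Fin.lt_def] at hgt
    simp only [Fin.val_rev] at this hgt
    omega

theorem IsNC.even_ncard_cross (hf : IsNC α f) : Even {c | Cross f c}.ncard := by
  classical
  set L : Finset (Fin (4 * n)) := Finset.univ.filter fun c => (c : ℕ) < 2 * n
  have hL : L.card = 2 * n := by
    rw [Fin.card_filter_val_lt]
    omega
  have hcross : {c | Cross f c} = ↑(L.filter fun c => f c ∉ L) := by
    ext c
    simp [L, Cross]
  have hsplit := L.card_filter_add_card_filter_not (fun c => f c ∈ L)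
  obtain ⟨r, hr⟩ := L.even_card_filter_apply_mem hf.1.invol hf.1.nofix
  rw [hcross, Set.ncard_coe_finset]
  exact ⟨n - r, by omega⟩

theorem CupDiagram.exists_linked (D : CupDiagram n α) (ha : Cross D.f a) :
    ∃ b, D.Linked a b ∨ D.Linked b a := by
  have hfin : {c | Cross D.f c}.Finite := Set.toFinite _
  have hpos : 1 ≤ rank D.f a := (Set.ncard_pos (Set.toFinite _)).mpr ⟨a, ha, le_rfl⟩
  have hle : rank D.f a ≤ {c | Cross D.f c}.ncard :=
    Set.ncard_le_ncard (fun c hc => hc.1) hfin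
  obtain ⟨N, hN⟩ := D.matching.even_ncard_cross
  rcases Nat.even_or_odd (rank D.f a) with ⟨r, hr⟩ | hodd
  · obtain ⟨b, hb, hrank⟩ := hfin.exists_ncard_sep_le_eq (j := rank D.f a - 1) (by omega)
      (by omega)
    replace hrank : rank D.f b = rank D.f a - 1 := hrank
    exact ⟨b, Or.inr ⟨hb, ha, ⟨r - 1, by omega⟩, by omega⟩⟩
  · obtain ⟨r, hr⟩ := hodd
    obtain ⟨b, hb, hrank⟩ := hfin.exists_ncard_sep_le_eq (j := rank D.f a + 1) (by omega)
      (by omega)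
    exact ⟨b, Or.inl ⟨ha, hb, ⟨r, hr⟩, hrank⟩⟩

theorem CupDiagram.Linked.g_eq {D : CupDiagram n α} (h : D.Linked a b) :
    D.g a = b.rev ∧ D.g b = a.rev ∧ D.g b.rev = a ∧ D.g a.rev = b := by
  have := D.link a b h.1 h.2.1 h.2.2.1 h.2.2.2
  rwa [D.matching.apply_eq_rev_of_cross h.1, D.matching.apply_eq_rev_of_cross h.2.1] at this

theorem CupDiagram.g_rev_of_cross (D : CupDiagram n α) (ha : Cross D.f a) :
    D.g a.rev = (D.g a).rev := by
  obtain ⟨b, h | h⟩ := D.exists_linked ha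
  · rw [h.g_eq.2.2.2, h.g_eq.1, Fin.rev_rev]
  · rw [h.g_eq.2.2.1, h.g_eq.2.1, Fin.rev_rev]

theorem CupDiagram.g_rev (D : CupDiagram n α) (i : Fin (4 * n)) :
    D.g i.rev = (D.g i).rev := by
  have hf := D.matching
  by_cases hi : Cross D.f i
  · exact D.g_rev_of_cross hi
  by_cases hfi : Cross D.f (D.f i)
  · have hrev : (D.f i).rev = i := by rw [← hf.apply_eq_rev_of_cross hfi, hf.1.invol]
    have hj := D.g_rev_of_cross hfi
    rw [hrev] at hj
    rw [hj, Fin.rev_rev, ← Fin.rev_rev (D.f i), hrev]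
  have hri : ¬ Cross D.f i.rev := hf.cross_rev_iff.not.mpr hfi
  have hfri : ¬ Cross D.f (D.f i.rev) := by
    rwa [hf.apply_rev, hf.cross_rev_iff, hf.1.invol]
  rw [D.agree i hi hfi, D.agree _ hri hfri, hf.apply_rev]

end CupDiagram

section Circles

variable {m : ℕ} {gb gt σ : Fin m → Fin m} {p x y : Fin m}

theorem CircRel.map (hb : ∀ i, gb (σ i) = σ (gb i)) (ht : ∀ i, gt (σ i) = σ (gt i))
    (h : CircRel gb gt x y) : CircRel gb gt (σ x) (σ y) := by
  induction h with
  | rel a b hab =>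
    refine .rel _ _ ?_
    rcases hab with rfl | rfl
    exacts [.inl (hb a), .inr (ht a)]
  | refl => exact .refl _
  | symm _ _ _ ih => exact .symm _ _ ih
  | trans _ _ _ _ _ ih₁ ih₂ => exact .trans _ _ _ ih₁ ih₂

theorem apply_bot_mem_circleAt (h : x ∈ circleAt gb gt p) : gb x ∈ circleAt gb gt p :=
  .trans _ _ _ h (.rel _ _ (.inl rfl))

theorem apply_top_mem_circleAt (h : x ∈ circleAt gb gt p) : gt x ∈ circleAt gb gt p :=
  .trans _ _ _ h (.rel _ _ (.inr rfl))

theorem circleAt_stable_or_disjoint (hσ : Function.Involutive σ)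
    (hb : ∀ i, gb (σ i) = σ (gb i)) (ht : ∀ i, gt (σ i) = σ (gt i)) (p : Fin m) :
    (∀ x ∈ circleAt gb gt p, σ x ∈ circleAt gb gt p) ∨
      (∀ x ∈ circleAt gb gt p, σ x ∉ circleAt gb gt p) := by
  by_cases hp : σ p ∈ circleAt gb gt p
  · exact .inl fun x hx => .trans _ _ _ hp (hx.map hb ht)
  · refine .inr fun x hx hσx => hp (.trans _ _ _ hx ?_)
    simpa only [hσ x] using (CircRel.map hb ht hσx).symm

end Circles

theorem rev_mem_circleAt_of_linked {n : ℕ} {α β : Seq n} (D : CupDiagram n α)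
    (E : CupDiagram n β) {a b p : Fin (4 * n)}
    (hl : D.Linked a b ∨ E.Linked a b) :
    (a ∈ circleAt D.g E.g p → b.rev ∈ circleAt D.g E.g p) ∧
      (b ∈ circleAt D.g E.g p → a.rev ∈ circleAt D.g E.g p) := by
  rcases hl with hl | hl
  · exact ⟨fun h => hl.g_eq.1 ▸ apply_bot_mem_circleAt h,
      fun h => hl.g_eq.2.1 ▸ apply_bot_mem_circleAt h⟩
  · exact ⟨fun h => hl.g_eq.1 ▸ apply_top_mem_circleAt h,
      fun h => hl.g_eq.2.1 ▸ apply_top_mem_circleAt h⟩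

theorem statement_10_general (n : ℕ) (α β : Seq n)
    (D : CupDiagram n α) (E : CupDiagram n β) (p : Fin (4 * n)) :
    (∀ a b, (D.Linked a b ∨ E.Linked a b) →
        (a ∈ circleAt D.g E.g p ∨ b ∈ circleAt D.g E.g p) →
        (a ∈ circleAt D.g E.g p ∧ b ∈ circleAt D.g E.g p)) ∨
    (∀ a b, (D.Linked a b ∨ E.Linked a b) →
        (a ∈ circleAt D.g E.g p ∨ b ∈ circleAt D.g E.g p) →
        Xor' (a ∈ circleAt D.g E.g p) (b ∈ circleAt D.g E.g p)) := by
  rcases circleAt_stable_or_disjoint Fin.rev_involutive D.g_rev E.g_rev p with hstable | hdisj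
  · left
    rintro a b hl (ha | hb)
    · exact ⟨ha, by simpa only [Fin.rev_rev] using hstable _ ((rev_mem_circleAt_of_linked D E hl).1 ha)⟩
    · exact ⟨by simpa only [Fin.rev_rev] using hstable _ ((rev_mem_circleAt_of_linked D E hl).2 hb), hb⟩
  · right
    rintro a b hl (ha | hb)
    · exact .inl ⟨ha, fun hb => hdisj b hb ((rev_mem_circleAt_of_linked D E hl).1 ha)⟩
    · exact .inr ⟨hb, fun ha => hdisj a ha ((rev_mem_circleAt_of_linked D E hl).2 hb)⟩

/-- In a circle diagram formed by gluing a cap diagram (the vertical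
reflection of the cup diagram `C(w')`) on top of a cup diagram `C(w)` (type `D`), any
circle that crosses the middle axis either contains both members of every linked pair it
meets, or contains exactly one member of every linked pair it meets. -/
theorem statement_10 (n : ℕ) (hn : 4 ≤ n) (α β : Seq n)
    (hα : EvenMinus α) (hβ : EvenMinus β)
    (D : CupDiagram n α) (E : CupDiagram n β) (p : Fin (4 * n))
    (hmid : ∃ a, a ∈ circleAt D.g E.g p ∧ (Cross D.f a ∨ Cross E.f a)) :
    (∀ a b, (D.Linked a b ∨ E.Linked a b) →
        (a ∈ circleAt D.g E.g p ∨ b ∈ circleAt D.g E.g p) →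
        (a ∈ circleAt D.g E.g p ∧ b ∈ circleAt D.g E.g p)) ∨
    (∀ a b, (D.Linked a b ∨ E.Linked a b) →
        (a ∈ circleAt D.g E.g p ∨ b ∈ circleAt D.g E.g p) →
        Xor' (a ∈ circleAt D.g E.g p) (b ∈ circleAt D.g E.g p)) :=
  statement_10_general n α β D E p

end TypeD
end
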